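/- arXiv:2207.13456 — 9 statements merged into one kernel-verified Lean document; each statement's English description precedes it below -/
import Mathlib

section
/- Let F be a field and let n ≥ 2 be a natural number. Let J denote the (n+1)×(n+1) all-ones matrix over F. For c ∈ F and a : Fin (n+1) → F, the matrix M = c • J + Matrix.diagonal a has rank exactly 1 if and only if exactly one of the n+2 scalars a 0, a 1, …, a n, c is nonzero. -/
/-- The matrix form of the theorem that the span of the Veronese images of a frame of
`ℙ^n` is an identifiable Waring subspace with respect to the quadric Veronese variety:
for a field `F` and `n ≥ 2`, the matrix `c • J + diagonal a` (where `J` is the all-ones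
matrix) has rank exactly one iff exactly one of the scalars `a 0, …, a n, c` is nonzero. -/
theorem stmt0 (F : Type*) [Field F] (n : ℕ) (hn : 2 ≤ n) (c : F) (a : Fin (n + 1) → F) :
    (c • (Matrix.of fun _ _ => (1 : F)) + Matrix.diagonal a :
      Matrix (Fin (n + 1)) (Fin (n + 1)) F).rank = 1 ↔
    ((c = 0 ∧ ∃! i, a i ≠ 0) ∨ (c ≠ 0 ∧ ∀ i, a i = 0)) := by
  classical
  set J : Matrix (Fin (n+1)) (Fin (n+1)) F := Matrix.of fun _ _ => (1 : F) with hJ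
  set M : Matrix (Fin (n+1)) (Fin (n+1)) F := c • J + Matrix.diagonal a with hMdef
  have hdiag : ∀ b : Fin (n+1) → F,
      (Matrix.diagonal b).rank = 1 ↔ ∃! i, b i ≠ 0 := by
    intro b
    rw [Matrix.rank_diagonal, Fintype.card_eq_one_iff]
    constructor
    · rintro ⟨⟨i, hi⟩, h2⟩
      exact ⟨i, hi, fun y hy => congrArg Subtype.val (h2 ⟨y, hy⟩)⟩
    · rintro ⟨i, hi, h2⟩
      exact ⟨⟨i, hi⟩, fun y => Subtype.ext (h2 y.1 y.2)⟩
  constructor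
  · intro h
    by_cases hc : c = 0
    · left
      refine ⟨hc, ?_⟩
      rw [hMdef, hc, zero_smul, zero_add] at h
      exact (hdiag a).mp h
    · right
      refine ⟨hc, ?_⟩
      by_contra hcon
      push_neg at hcon
      obtain ⟨j, hj⟩ := hcon
      -- find k ≠ j and l ∉ {j, k}
      obtain ⟨k, hk⟩ := Finset.card_pos.mp (by
        rw [Finset.card_compl]
        simp [Fintype.card_fin]
        omega : 0 < (({j} : Finset (Fin (n+1)))ᶜ).card)
      have hkj : k ≠ j := by simpa using Finset.mem_compl.mp hk
      obtain ⟨l, hl⟩ := Finset.card_pos.mp (by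
        have h2 : ({j, k} : Finset (Fin (n+1))).card ≤ 2 :=
          (Finset.card_insert_le _ _).trans (by simp)
        rw [Finset.card_compl]
        have h3 : 2 < Fintype.card (Fin (n+1)) := by
          simp only [Fintype.card_fin]; omega
        omega : 0 < (({j, k} : Finset (Fin (n+1)))ᶜ).card)
      have hlj : l ≠ j := by
        have := Finset.mem_compl.mp hl; simp at this; exact this.1
      have hlk : l ≠ k := by
        have := Finset.mem_compl.mp hl; simp at this; exact this.2
      -- the range is principal
      have hp : (LinearMap.range M.mulVecLin).IsPrincipal :=
        (Submodule.finrank_le_one_iff_isPrincipal _).mp (le_of_eq h)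
      obtain ⟨v, hv⟩ := hp
      set u : Fin (n+1) → F := M.mulVec (Pi.single j 1) with hu
      set w : Fin (n+1) → F := M.mulVec (Pi.single j 1 - Pi.single k 1) with hw
      have hum : u ∈ LinearMap.range M.mulVecLin := ⟨Pi.single j 1, rfl⟩
      have hwm : w ∈ LinearMap.range M.mulVecLin := ⟨_, rfl⟩
      rw [hv, Submodule.mem_span_singleton] at hum hwm
      obtain ⟨r, hr⟩ := hum
      obtain ⟨s, hs⟩ := hwm
      have hMentry : ∀ i i' : Fin (n+1), M i i' = c + if i = i' then a i else 0 := by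
        intro i i'
        simp [hMdef, hJ, Matrix.diagonal_apply]
      have hul : u l = c := by
        rw [hu]
        simp [hMentry, hlj]
      have hwj : w j = a j := by
        rw [hw, Matrix.mulVec_sub]
        simp [hMentry, hkj.symm]
      have hwl : w l = 0 := by
        rw [hw, Matrix.mulVec_sub]
        simp [hMentry, hlj, hlk]
      have hvl : v l ≠ 0 := by
        intro h0
        have : u l = 0 := by rw [← hr]; simp [h0]
        rw [hul] at this; exact hc this
      have hs0 : s ≠ 0 := by
        intro h0
        have : w j = 0 := by rw [← hs, h0]; simp
        rw [hwj] at this; exact hj this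
      have : w l ≠ 0 := by
        rw [← hs]
        simpa using mul_ne_zero hs0 hvl
      exact this hwl
  · rintro (⟨hc, hex⟩ | ⟨hc, ha⟩)
    · rw [hMdef, hc, zero_smul, zero_add]
      exact (hdiag a).mpr hex
    · have ha' : Matrix.diagonal a = 0 := by
        ext i i'
        by_cases hii : i = i' <;> simp [Matrix.diagonal_apply, hii, ha]
      rw [hMdef, ha', add_zero]
      -- M = c • J has rank 1
      have hfac : c • J =
          (Matrix.of fun (_ : Fin (n+1)) (_ : Fin 1) => (1 : F)) *
          (Matrix.of fun (_ : Fin 1) (_ : Fin (n+1)) => c) := by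
        ext i i'
        simp [Matrix.mul_apply, hJ]
      have hle : (c • J).rank ≤ 1 := by
        rw [hfac]
        exact (Matrix.rank_mul_le_left _ _).trans
          ((Matrix.rank_le_card_width _).trans (by simp))
      have hge : 1 ≤ (c • J).rank := by
        by_contra hlt
        push_neg at hlt
        have h0 : (c • J).rank = 0 := by omega
        have hmem : ((c • J).mulVec (Pi.single 0 1)) ∈
            LinearMap.range (c • J).mulVecLin := ⟨_, rfl⟩
        rw [Matrix.rank] at h0
        rw [Submodule.finrank_eq_zero.mp h0, Submodule.mem_bot] at hmem
        have h1 : ((c • J).mulVec (Pi.single 0 1)) 0 = c := by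
          simp [hJ]
        rw [hmem] at h1
        exact hc (by simpa using h1.symm)
      omega
end

section
/- Let F be a field, let k and m be natural numbers, let v : Fin k → (Fin m → F) be a linearly independent family of vectors, and let a : Fin k → F. Then the m×m matrix Σ_i a i • (v i) (v i)ᵀ has rank equal to the cardinality of {i : a i ≠ 0}. In particular, it has rank at most 1 if and only if at most one a i is nonzero. -/
/-- Construction (S2): for a linearly independent family `v : Fin k → (Fin m → F)` and
scalars `a : Fin k → F`, the matrix `∑ i, a i • (v i)(v i)ᵀ` has rank equal to the number
of indices `i` with `a i ≠ 0`; in particular its rank is at most one iff at most one of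
the `a i` is nonzero. -/
theorem stmt1 (F : Type*) [Field F] (k m : ℕ) (v : Fin k → (Fin m → F))
    (hv : LinearIndependent F v) (a : Fin k → F) :
    (∑ i, a i • Matrix.vecMulVec (v i) (v i)).rank = Nat.card {i // a i ≠ 0} ∧
    ((∑ i, a i • Matrix.vecMulVec (v i) (v i)).rank ≤ 1 ↔
      ∀ i j, a i ≠ 0 → a j ≠ 0 → i = j) := by
  classical
  set A : Matrix (Fin k) (Fin m) F := Matrix.of v with hA
  have hM : (∑ i, a i • Matrix.vecMulVec (v i) (v i)) = A.transpose * (Matrix.diagonal a * A) := by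
    ext p q
    simp [Matrix.mul_apply, Matrix.vecMulVec_apply, Matrix.diagonal, Matrix.sum_apply, hA,
      Finset.mul_sum]
    apply Finset.sum_congr rfl
    intro i _
    ring
  -- injectivity of mulVecLin A.transpose
  have hinj : Function.Injective (Matrix.mulVecLin A.transpose) := by
    rw [Matrix.mulVecLin_transpose]
    rw [Matrix.coe_vecMulLinear]
    exact Matrix.vecMul_injective_iff.mpr hv
  -- surjectivity of mulVecLin A
  have hrankA : A.rank = k := by
    have := hv.rank_matrix (M := A)
    simpa using this
  have hsurj : Function.Surjective (Matrix.mulVecLin A) := by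
    rw [← LinearMap.range_eq_top]
    apply Submodule.eq_top_of_finrank_eq
    rw [← Matrix.rank, hrankA]
    simp [Module.finrank_fintype_fun_eq_card]
  have key : (∑ i, a i • Matrix.vecMulVec (v i) (v i)).rank
      = Nat.card {i // a i ≠ 0} := by
    rw [hM, Matrix.rank, Matrix.mulVecLin_mul, LinearMap.range_comp,
      Matrix.mulVecLin_mul, LinearMap.range_comp, LinearMap.range_eq_top.mpr hsurj,
      Submodule.map_top]
    rw [← LinearMap.range_comp]
    have : Module.finrank F ((LinearMap.range (Matrix.mulVecLin (Matrix.diagonal a))).map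
        (Matrix.mulVecLin A.transpose)) = Module.finrank F (LinearMap.range (Matrix.mulVecLin (Matrix.diagonal a))) := by
      exact (Submodule.equivMapOfInjective _ hinj _).finrank_eq.symm
    rw [LinearMap.range_comp, this, ← Matrix.rank, Matrix.rank_diagonal,
      Nat.card_eq_fintype_card]
  refine ⟨key, ?_⟩
  rw [key, Nat.card_eq_fintype_card, Fintype.card_le_one_iff]
  constructor
  · intro h i j hi hj
    exact Subtype.mk_eq_mk.mp (h ⟨i, hi⟩ ⟨j, hj⟩)
  · intro h x y
    exact Subtype.ext (h x y x.2 y.2)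
end

section
/- Let F be a field with at least 3 elements and let m ≥ 2. Let v₁, v₂, v₃ be nonzero vectors of Fin m → F that span pairwise distinct one-dimensional subspaces and are contained in a common 2-dimensional subspace of Fin m → F. Then there exists a nonzero vector w ∈ Fin m → F spanning a one-dimensional subspace distinct from those of v₁, v₂, v₃ such that w wᵀ lies in the F-linear span of v₁v₁ᵀ, v₂v₂ᵀ, v₃v₃ᵀ. -/
/-- Over a field with at least three elements, three collinear points of `ℙ^{m-1}`
(i.e. three pairwise non-proportional nonzero vectors in a common plane) never give an
identifiable Waring plane: the span of `v₁v₁ᵀ, v₂v₂ᵀ, v₃v₃ᵀ` contains the Veronese image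
`w wᵀ` of a fourth point of the line. -/
theorem stmt3 (F : Type*) [Field F] (hF : ∃ x : F, x ≠ 0 ∧ x ≠ 1) (m : ℕ) (hm : 2 ≤ m)
    (v₁ v₂ v₃ : Fin m → F)
    (hn₁ : v₁ ≠ 0) (hn₂ : v₂ ≠ 0) (hn₃ : v₃ ≠ 0)
    (h12 : Submodule.span F {v₁} ≠ Submodule.span F {v₂})
    (h13 : Submodule.span F {v₁} ≠ Submodule.span F {v₃})
    (h23 : Submodule.span F {v₂} ≠ Submodule.span F {v₃})
    (W : Submodule F (Fin m → F)) (hW : Module.finrank F W = 2)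
    (hv₁ : v₁ ∈ W) (hv₂ : v₂ ∈ W) (hv₃ : v₃ ∈ W) :
    ∃ w : Fin m → F, w ≠ 0 ∧
      Submodule.span F {w} ≠ Submodule.span F {v₁} ∧
      Submodule.span F {w} ≠ Submodule.span F {v₂} ∧
      Submodule.span F {w} ≠ Submodule.span F {v₃} ∧
      Matrix.vecMulVec w w ∈ Submodule.span F
        {Matrix.vecMulVec v₁ v₁, Matrix.vecMulVec v₂ v₂, Matrix.vecMulVec v₃ v₃} := by
  obtain ⟨t, ht0, ht1⟩ := hF
  -- linear independence of v₁ v₂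
  have hind : LinearIndependent F ![v₁, v₂] := by
    rw [LinearIndependent.pair_iff]
    intro s r hsr
    by_contra hc
    push_neg at hc
    by_cases hs : s = 0
    · subst hs
      simp at hsr
      rcases hsr with h | h
      · exact hc rfl h
      · exact hn₂ h
    · apply h12
      have : v₁ = (-r/s) • v₂ := by
        have : s • v₁ = (-r) • v₂ := by linear_combination (norm := module) hsr
        rw [div_eq_mul_inv, mul_comm, ← smul_smul, ← this, smul_smul,
          inv_mul_cancel₀ hs, one_smul]
      rw [this]
      have hr : (-r/s) ≠ 0 := by
        intro h
        rw [h, zero_smul] at this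
        exact hn₁ this
      rw [Submodule.span_singleton_smul_eq (isUnit_iff_ne_zero.mpr hr) v₂]
  have hindc : ∀ s r : F, s • v₁ + r • v₂ = 0 → s = 0 ∧ r = 0 :=
    LinearIndependent.pair_iff.mp hind
  -- span{v₁,v₂} = W
  have hle : Submodule.span F {v₁, v₂} ≤ W := by
    rw [Submodule.span_le]; rintro x (rfl | rfl) <;> assumption
  have hfr : Module.finrank F (Submodule.span F ({v₁, v₂} : Set (Fin m → F))) = 2 := by
    have := finrank_span_eq_card (R := F) hind
    rw [show (Set.range ![v₁, v₂]) = {v₁, v₂} by ext x; simp [Matrix.range_cons]; tauto] at this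
    simpa using this
  have hWeq : Submodule.span F ({v₁, v₂} : Set (Fin m → F)) = W := by
    apply Submodule.eq_of_le_of_finrank_le hle
    rw [hfr, hW]
  have hv3 : v₃ ∈ Submodule.span F ({v₁, v₂} : Set (Fin m → F)) := hWeq ▸ hv₃
  rw [Submodule.mem_span_pair] at hv3
  obtain ⟨a, b, hab⟩ := hv3
  -- a, b nonzero
  have spansm : ∀ (u v : Fin m → F) (c : F), c ≠ 0 → u = c • v →
      Submodule.span F {u} = Submodule.span F {v} := by
    intro u v c hc h
    rw [h, Submodule.span_singleton_smul_eq (isUnit_iff_ne_zero.mpr hc) v]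
  have ha : a ≠ 0 := by
    intro h
    subst h
    rw [zero_smul, zero_add] at hab
    have hb : b ≠ 0 := by rintro rfl; rw [zero_smul] at hab; exact hn₃ hab.symm
    exact h23 ((spansm v₃ v₂ b hb hab.symm)).symm
  have hb : b ≠ 0 := by
    intro h
    subst h
    rw [zero_smul, add_zero] at hab
    exact h13 ((spansm v₃ v₁ a ha hab.symm)).symm
  refine ⟨a • v₁ + (t * b) • v₂, ?_, ?_, ?_, ?_, ?_⟩
  · intro h
    exact ha (hindc a (t * b) h).1
  · -- ≠ span v₁
    intro h
    have : a • v₁ + (t * b) • v₂ ∈ Submodule.span F {v₁} := by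
      rw [← h]; exact Submodule.mem_span_singleton_self _
    obtain ⟨c, hc⟩ := Submodule.mem_span_singleton.mp this
    have : (a - c) • v₁ + (t * b) • v₂ = 0 := by
      linear_combination (norm := module) -hc
    exact (mul_ne_zero ht0 hb) (hindc _ _ this).2
  · intro h
    have : a • v₁ + (t * b) • v₂ ∈ Submodule.span F {v₂} := by
      rw [← h]; exact Submodule.mem_span_singleton_self _
    obtain ⟨c, hc⟩ := Submodule.mem_span_singleton.mp this
    have : a • v₁ + (t * b - c) • v₂ = 0 := by
      linear_combination (norm := module) -hc
    exact ha (hindc _ _ this).1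
  · intro h
    have : a • v₁ + (t * b) • v₂ ∈ Submodule.span F {v₃} := by
      rw [← h]; exact Submodule.mem_span_singleton_self _
    obtain ⟨c, hc⟩ := Submodule.mem_span_singleton.mp this
    rw [← hab, smul_add, smul_smul, smul_smul] at hc
    have h2 : (c * a - a) • v₁ + (c * b - t * b) • v₂ = 0 := by
      linear_combination (norm := module) hc
    obtain ⟨e1, e2⟩ := hindc _ _ h2
    have hc1 : c = 1 := by
      have h' : (c - 1) * a = 0 := by linear_combination e1
      rcases mul_eq_zero.mp h' with h' | h'
      · exact sub_eq_zero.mp h'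
      · exact absurd h' ha
    subst hc1
    apply ht1
    have h'' : (1 - t) * b = 0 := by linear_combination e2
    rcases mul_eq_zero.mp h'' with h' | h'
    · exact (sub_eq_zero.mp h').symm
    · exact absurd h' hb
  · -- membership
    have key : Matrix.vecMulVec (a • v₁ + (t * b) • v₂) (a • v₁ + (t * b) • v₂) =
        ((1 - t) * a ^ 2) • Matrix.vecMulVec v₁ v₁ + ((t ^ 2 - t) * b ^ 2) • Matrix.vecMulVec v₂ v₂
          + t • Matrix.vecMulVec v₃ v₃ := by
      ext i j
      have h3 : v₃ = a • v₁ + b • v₂ := hab.symm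
      simp [Matrix.vecMulVec_apply, h3, Pi.add_apply, Pi.smul_apply, smul_eq_mul,
        Matrix.add_apply, Matrix.smul_apply]
      ring
    rw [key]
    have m1 : Matrix.vecMulVec v₁ v₁ ∈ Submodule.span F
        {Matrix.vecMulVec v₁ v₁, Matrix.vecMulVec v₂ v₂, Matrix.vecMulVec v₃ v₃} :=
      Submodule.subset_span (by simp)
    have m2 : Matrix.vecMulVec v₂ v₂ ∈ Submodule.span F
        {Matrix.vecMulVec v₁ v₁, Matrix.vecMulVec v₂ v₂, Matrix.vecMulVec v₃ v₃} :=
      Submodule.subset_span (by simp)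
    have m3 : Matrix.vecMulVec v₃ v₃ ∈ Submodule.span F
        {Matrix.vecMulVec v₁ v₁, Matrix.vecMulVec v₂ v₂, Matrix.vecMulVec v₃ v₃} :=
      Submodule.subset_span (by simp)
    exact Submodule.add_mem _ (Submodule.add_mem _ (Submodule.smul_mem _ _ m1) (Submodule.smul_mem _ _ m2)) (Submodule.smul_mem _ _ m3)
end

section
/- Let F be a field with char F ≠ 2. In Fin 4 → F, set w₁ = (1,0,0,0), w₂ = (0,1,0,0), w₃ = (0,0,1,0), w₄ = (0,0,0,1), w₅ = (1,1,1,1), w₆ = (1,−1,−1,0), w₇ = (−1,1,0,−1). Then: (a) the seven 4×4 matrices w₁w₁ᵀ, …, w₇w₇ᵀ are linearly independent over F; and (b) for all (a,b,c,d,e,f,g) ∈ F⁷, the matrix a•w₁w₁ᵀ + b•w₂w₂ᵀ + c•w₃w₃ᵀ + d•w₄w₄ᵀ + e•w₅w₅ᵀ + f•w₆w₆ᵀ + g•w₇w₇ᵀ has rank exactly 1 if and only if exactly one of a, b, c, d, e, f, g is nonzero. -/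
/-!
A matrix of rank at most one has all its `2 × 2` minors equal to zero. Written out in
coordinates, `∑ αᵢ wᵢ wᵢᵀ` has three minors avoiding the diagonal that involve only the
coefficients `e, f, g` of `w₅, w₆, w₇`; they give `f g = 0` and `2 e (f + g) = 0`, hence (as
`2 ≠ 0`) `(e f)² = 0`, so `e, f, g` have pairwise zero products. Minors through the diagonal then
kill every remaining product `αᵢ αⱼ`, so at most one coefficient survives, and a nonzero
multiple of a single `wᵢ wᵢᵀ` has rank one.
-/

open Matrix

namespace Matrix

variable {R m n : Type*} [CommRing R] [IsDomain R] [Fintype n]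

theorem apply_mul_apply_eq_of_rank_le_one {A : Matrix m n R} (h : A.rank ≤ 1) (i j : m)
    (k l : n) : A i k * A j l = A i l * A j k := by
  by_contra hdet
  have h2 :=
    (A.submatrix ![i, j] ![k, l]).rank_of_det_ne_zero (by rwa [det_fin_two, sub_ne_zero])
  have := A.rank_submatrix_le ![i, j] ![k, l]
  simp only [h2, Fintype.card_fin] at this
  omega

theorem rank_pos_of_ne_zero {A : Matrix m n R} (hA : A ≠ 0) : 0 < A.rank := by
  obtain ⟨i, k, hik⟩ : ∃ i k, A i k ≠ 0 := by
    by_contra! h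
    exact hA (ext h)
  have h1 := (A.submatrix ![i] ![k]).rank_of_det_ne_zero (by rwa [det_fin_one])
  have := A.rank_submatrix_le ![i] ![k]
  simp only [h1, Fintype.card_fin] at this
  omega

end Matrix

theorem existsUnique_ne_zero_of_pairwise_mul_eq_zero {ι M₀ : Type*}
    [MulZeroClass M₀] [NoZeroDivisors M₀] {α : ι → M₀} (h0 : α ≠ 0)
    (h : Pairwise fun i j => α i * α j = 0) :
    ∃! i, α i ≠ 0 := by
  obtain ⟨i, hi⟩ := Function.ne_iff.mp h0
  exact ⟨i, hi, fun j hj => by_contra fun hji => mul_ne_zero hj hi (h hji)⟩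

namespace WaringSubspace

variable {F : Type*} [Field F]

variable (F) in
def gen : Fin 7 → Fin 4 → F :=
  ![![1,0,0,0], ![0,1,0,0], ![0,0,1,0], ![0,0,0,1],
    ![1,1,1,1], ![1,-1,-1,0], ![-1,1,0,-1]]

def spanMatrix (a b c d e f g : F) : Matrix (Fin 4) (Fin 4) F :=
  !![a + e + f + g, e - f - g, e - f, e + g;
     e - f - g, b + e + f + g, e + f, e - g;
     e - f, e + f, c + e + f, e;
     e + g, e - g, e, d + e + g]

theorem sum_smul_vecMulVec_gen (α : Fin 7 → F) :
    ∑ i, α i • vecMulVec (gen F i) (gen F i) =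
      spanMatrix (α 0) (α 1) (α 2) (α 3) (α 4) (α 5) (α 6) := by
  ext i j
  fin_cases i <;> fin_cases j <;> simp [Fin.sum_univ_succ, gen, spanMatrix] <;> ring

theorem linearIndependent_vecMulVec_gen :
    LinearIndependent F fun i => vecMulVec (gen F i) (gen F i) := by
  refine Fintype.linearIndependent_iff.mpr fun α hα => ?_
  rw [sum_smul_vecMulVec_gen] at hα
  have q00 : α 0 + α 4 + α 5 + α 6 = 0 := congrFun (congrFun hα 0) 0
  have q11 : α 1 + α 4 + α 5 + α 6 = 0 := congrFun (congrFun hα 1) 1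
  have q22 : α 2 + α 4 + α 5 = 0 := congrFun (congrFun hα 2) 2
  have q33 : α 3 + α 4 + α 6 = 0 := congrFun (congrFun hα 3) 3
  have q23 : α 4 = 0 := congrFun (congrFun hα 2) 3
  have q12 : α 4 + α 5 = 0 := congrFun (congrFun hα 1) 2
  have q03 : α 4 + α 6 = 0 := congrFun (congrFun hα 0) 3
  intro i
  fin_cases i <;> simp only [Fin.reduceFinMk]
  · linear_combination q00 + q23 - q12 - q03
  · linear_combination q11 + q23 - q12 - q03
  · linear_combination q22 - q12
  · linear_combination q33 - q03
  · linear_combination q23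
  · linear_combination q12 - q23
  · linear_combination q03 - q23

variable {a b c d e f g : F}

theorem efg_products_eq_zero (h : (spanMatrix a b c d e f g).rank ≤ 1) (h2 : (2 : F) ≠ 0) :
    e * f = 0 ∧ e * g = 0 ∧ f * g = 0 := by
  have minor := apply_mul_apply_eq_of_rank_le_one h
  have m0312 : (e - f - g) * e = (e - f) * (e - g) := minor 0 3 1 2
  have m0123 : (e - f) * (e - g) = (e + g) * (e + f) := minor 0 1 2 3
  have hfg : f * g = 0 := by linear_combination -m0312
  have hefg : e * (f + g) = 0 := (mul_eq_zero_iff_left h2).mp (by linear_combination -m0123)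
  have hef : e * f = 0 := by
    refine pow_eq_zero_iff (n := 2) two_ne_zero |>.mp ?_
    linear_combination e * f * hefg - e ^ 2 * hfg
  exact ⟨hef, by linear_combination hefg - hef, hfg⟩

theorem abcd_efg_products_eq_zero (h : (spanMatrix a b c d e f g).rank ≤ 1)
    (h2 : (2 : F) ≠ 0) :
    (a * e = 0 ∧ a * f = 0 ∧ a * g = 0) ∧ (b * e = 0 ∧ b * f = 0 ∧ b * g = 0) ∧
      (c * e = 0 ∧ c * f = 0 ∧ c * g = 0) ∧ (d * e = 0 ∧ d * f = 0 ∧ d * g = 0) := by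
  have minor := apply_mul_apply_eq_of_rank_le_one h
  obtain ⟨hef, heg, hfg⟩ := efg_products_eq_zero h h2
  have m0203 : (a + e + f + g) * e = (e + g) * (e - f) := minor 0 2 0 3
  have m0102 : (a + e + f + g) * (e + f) = (e - f) * (e - f - g) := minor 0 1 0 2
  have m0103 : (a + e + f + g) * (e - g) = (e + g) * (e - f - g) := minor 0 1 0 3
  have m1213 : (b + e + f + g) * e = (e - g) * (e + f) := minor 1 2 1 3
  have m1012 : (b + e + f + g) * (e - f) = (e + f) * (e - f - g) := minor 1 0 1 2
  have m1013 : (b + e + f + g) * (e + g) = (e - g) * (e - f - g) := minor 1 0 1 3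
  have m2021 : (c + e + f) * (e - f - g) = (e + f) * (e - f) := minor 2 0 2 1
  have m2023 : (c + e + f) * (e + g) = e * (e - f) := minor 2 0 2 3
  have m2123 : (c + e + f) * (e - g) = e * (e + f) := minor 2 1 2 3
  have m3031 : (d + e + g) * (e - f - g) = (e - g) * (e + g) := minor 3 0 3 1
  have m3032 : (d + e + g) * (e - f) = e * (e + g) := minor 3 0 3 2
  have m3132 : (d + e + g) * (e + f) = e * (e - g) := minor 3 1 3 2
  have hae : a * e = 0 := by linear_combination m0203 - 2 * hef - hfg
  have haf : a * f = 0 := by linear_combination m0102 - hae - 4 * hef - 2 * heg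
  have hag : a * g = 0 := by linear_combination -m0103 + hae + 2 * hef
  have hbe : b * e = 0 := by linear_combination m1213 - 2 * heg - hfg
  have hbf : b * f = 0 := by linear_combination -m1012 + hbe + 2 * heg
  have hbg : b * g = 0 := by linear_combination m1013 - hbe - 4 * heg - 2 * hef
  have hce : c * e = 0 :=
    (mul_eq_zero_iff_left h2).mp (by linear_combination m2023 + m2123 - 2 * hef)
  have hcg : c * g = 0 := by linear_combination m2023 - hce - heg - hfg - 2 * hef
  have hcf : c * f = 0 := by linear_combination -m2021 + hce - hcg - hfg - heg
  have hde : d * e = 0 :=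
    (mul_eq_zero_iff_left h2).mp (by linear_combination m3032 + m3132 - 2 * heg)
  have hdf : d * f = 0 := by linear_combination m3132 - hde - hef - hfg - 2 * heg
  have hdg : d * g = 0 := by linear_combination -m3031 + hde - hdf - hfg - hef
  exact ⟨⟨hae, haf, hag⟩, ⟨hbe, hbf, hbg⟩, ⟨hce, hcf, hcg⟩, ⟨hde, hdf, hdg⟩⟩

theorem abcd_products_eq_zero (h : (spanMatrix a b c d e f g).rank ≤ 1) (h2 : (2 : F) ≠ 0) :
    a * b = 0 ∧ a * c = 0 ∧ a * d = 0 ∧ b * c = 0 ∧ b * d = 0 ∧ c * d = 0 := by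
  have minor := apply_mul_apply_eq_of_rank_le_one h
  obtain ⟨hef, heg, hfg⟩ := efg_products_eq_zero h h2
  obtain ⟨⟨hae, haf, hag⟩, ⟨hbe, hbf, hbg⟩, ⟨hce, hcf, hcg⟩, ⟨hde, hdf, hdg⟩⟩ :=
    abcd_efg_products_eq_zero h h2
  have m0101 : (a + e + f + g) * (b + e + f + g) = (e - f - g) * (e - f - g) := minor 0 1 0 1
  have m0202 : (a + e + f + g) * (c + e + f) = (e - f) * (e - f) := minor 0 2 0 2
  have m0303 : (a + e + f + g) * (d + e + g) = (e + g) * (e + g) := minor 0 3 0 3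
  have m1212 : (b + e + f + g) * (c + e + f) = (e + f) * (e + f) := minor 1 2 1 2
  have m1313 : (b + e + f + g) * (d + e + g) = (e - g) * (e - g) := minor 1 3 1 3
  have m2323 : (c + e + f) * (d + e + g) = e * e := minor 2 3 2 3
  refine ⟨?_, ?_, ?_, ?_, ?_, ?_⟩
  · linear_combination m0101 - hae - haf - hag - hbe - hbf - hbg - 4 * hef - 4 * heg
  · linear_combination m0202 - hae - haf - hce - hcf - hcg - 4 * hef - heg - hfg
  · linear_combination m0303 - hae - hag - hde - hdg - hdf - hef - hfg
  · linear_combination m1212 - hbe - hbf - hce - hcf - hcg - heg - hfg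
  · linear_combination m1313 - hbe - hbg - hde - hdg - hdf - 4 * heg - hef - hfg
  · linear_combination m2323 - hce - hcg - hde - hdf - hef - heg - hfg

theorem pairwise_mul_eq_zero_of_rank_le_one (h2 : (2 : F) ≠ 0) {α : Fin 7 → F}
    (h : (spanMatrix (α 0) (α 1) (α 2) (α 3) (α 4) (α 5) (α 6)).rank ≤ 1) :
    Pairwise fun i j => α i * α j = 0 := by
  obtain ⟨hef, heg, hfg⟩ := efg_products_eq_zero h h2
  obtain ⟨⟨hae, haf, hag⟩, ⟨hbe, hbf, hbg⟩, ⟨hce, hcf, hcg⟩, ⟨hde, hdf, hdg⟩⟩ :=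
    abcd_efg_products_eq_zero h h2
  obtain ⟨hab, hac, had, hbc, hbd, hcd⟩ := abcd_products_eq_zero h h2
  intro i j hij
  fin_cases i <;> fin_cases j <;>
    first | exact absurd rfl hij | assumption | (rw [mul_comm]; assumption)

end WaringSubspace

open WaringSubspace in
/-- Over a field of characteristic ≠ 2, the seven rank-one matrices built from
`e₁, e₂, e₃, e₄, e₁+e₂+e₃+e₄, e₁-e₂-e₃, -e₁+e₂-e₄` are linearly independent, and a linear
combination of them has rank exactly one iff exactly one coefficient is nonzero. -/
theorem stmt4 (F : Type*) [Field F] (hchar : ringChar F ≠ 2) :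
    let w : Fin 7 → (Fin 4 → F) :=
      ![![1,0,0,0], ![0,1,0,0], ![0,0,1,0], ![0,0,0,1],
        ![1,1,1,1], ![1,-1,-1,0], ![-1,1,0,-1]]
    LinearIndependent F (fun i => Matrix.vecMulVec (w i) (w i)) ∧
    ∀ α : Fin 7 → F,
      ((∑ i, α i • Matrix.vecMulVec (w i) (w i)).rank = 1 ↔ ∃! i, α i ≠ 0) := by
  intro w
  have h2 : (2 : F) ≠ 0 := Ring.two_ne_zero hchar
  have hli : LinearIndependent F fun i => vecMulVec (w i) (w i) := linearIndependent_vecMulVec_gen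
  refine ⟨hli, fun α => ⟨fun hrank => ?_, fun ⟨i, hi, huniq⟩ => ?_⟩⟩
  · refine existsUnique_ne_zero_of_pairwise_mul_eq_zero ?_ ?_
    · rintro rfl
      simp at hrank
    · refine pairwise_mul_eq_zero_of_rank_le_one h2 ?_
      rw [← sum_smul_vecMulVec_gen]
      exact hrank.le
  · have hsum : ∑ j, α j • vecMulVec (w j) (w j) = α i • vecMulVec (w i) (w i) :=
      Fintype.sum_eq_single i fun j hj => by rw [not_ne_iff.mp (mt (huniq j) hj), zero_smul]
    rw [hsum]
    refine le_antisymm ?_ (rank_pos_of_ne_zero (smul_ne_zero hi (hli.ne_zero i)))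
    rw [← smul_vecMulVec]
    exact rank_vecMulVec_le _ _
end

section
/- Let F be a field and let s ∈ F be such that ω = s² satisfies ω ∉ {0, 1, 2}. In Fin 4 → F, set w₁ = (1,0,0,0), w₂ = (0,1,0,0), w₃ = (0,0,1,0), w₄ = (0,0,0,1), w₅ = (1,1,1,1), w₆ = (ω,1,ω,0), w₇ = (s,s,0,s·ω). Then: (a) the seven 4×4 matrices w₁w₁ᵀ, …, w₇w₇ᵀ are linearly independent over F; and (b) for all (a,b,c,d,e,f,g) ∈ F⁷, the matrix a•w₁w₁ᵀ + b•w₂w₂ᵀ + c•w₃w₃ᵀ + d•w₄w₄ᵀ + e•w₅w₅ᵀ + f•w₆w₆ᵀ + g•w₇w₇ᵀ has rank exactly 1 if and only if exactly one of a, b, c, d, e, f, g is nonzero. -/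
open Matrix in
theorem aux_rank_eq_one_iff {F : Type*} [Field F] {n : Type*} [Fintype n] [DecidableEq n]
    (A : Matrix n n F) :
    A.rank = 1 ↔ A ≠ 0 ∧ ∀ i j k l, A i j * A k l = A i l * A k j := by
  constructor
  · intro h
    have hA : A ≠ 0 := by rintro rfl; simp at h
    refine ⟨hA, ?_⟩
    rw [Matrix.rank, finrank_eq_one_iff'] at h
    obtain ⟨⟨v, hvmem⟩, hv0, hall⟩ := h
    have hcol : ∀ j, ∃ c : F, ∀ i, c * v i = A i j := by
      intro j
      have hmem : (fun i => A i j) ∈ LinearMap.range A.mulVecLin :=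
        ⟨Pi.single j 1, by
          ext i
          simp [Matrix.mulVecLin_apply, Matrix.mulVec_single]⟩
      obtain ⟨c, hc⟩ := hall ⟨_, hmem⟩
      exact ⟨c, fun i => congrFun (congrArg Subtype.val hc) i⟩
    intro i j k l
    obtain ⟨cj, hcj⟩ := hcol j
    obtain ⟨cl, hcl⟩ := hcol l
    rw [← hcj i, ← hcl k, ← hcl i, ← hcj k]; ring
  · rintro ⟨hA, hm⟩
    obtain ⟨i0, j0, h0⟩ : ∃ i j, A i j ≠ 0 := by
      by_contra h
      push_neg at h
      exact hA (Matrix.ext fun i j => h i j)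
    set v : n → F := fun i => A i j0 with hv
    have hvne : v ≠ 0 := fun h => h0 (by simpa [hv] using congrFun h i0)
    have hrange : LinearMap.range A.mulVecLin = Submodule.span F {v} := by
      apply le_antisymm
      · rintro x ⟨y, rfl⟩
        refine Submodule.mem_span_singleton.2 ⟨∑ j, y j * A i0 j / A i0 j0, ?_⟩
        funext i
        simp only [Matrix.mulVecLin_apply, Matrix.mulVec, dotProduct, Pi.smul_apply,
          smul_eq_mul, hv, Finset.sum_mul]
        refine Finset.sum_congr rfl fun j _ => ?_
        have := hm i j i0 j0
        field_simp
        linear_combination (- y j) * this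
      · rw [Submodule.span_singleton_le_iff_mem]
        exact ⟨Pi.single j0 1, by ext i; simp [Matrix.mulVecLin_apply, Matrix.mulVec_single, hv]⟩
    rw [Matrix.rank, hrange]
    exact finrank_span_singleton hvne

set_option maxHeartbeats 2000000 in
/-- For `ω = s²` with `ω ∉ {0,1,2}`, the seven rank-one matrices built from
`e₁, e₂, e₃, e₄, e₁+e₂+e₃+e₄, ωe₁+e₂+ωe₃, √ω e₁+√ω e₂+√ω³ e₄` are linearly independent,
and a linear combination of them has rank exactly one iff exactly one coefficient is
nonzero. -/
theorem stmt5 (F : Type*) [Field F] (s : F)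
    (hω0 : s ^ 2 ≠ 0) (hω1 : s ^ 2 ≠ 1) (hω2 : s ^ 2 ≠ 2) :
    let ω : F := s ^ 2
    let w : Fin 7 → (Fin 4 → F) :=
      ![![1,0,0,0], ![0,1,0,0], ![0,0,1,0], ![0,0,0,1],
        ![1,1,1,1], ![ω,1,ω,0], ![s,s,0,s*ω]]
    LinearIndependent F (fun i => Matrix.vecMulVec (w i) (w i)) ∧
    ∀ α : Fin 7 → F,
      ((∑ i, α i • Matrix.vecMulVec (w i) (w i)).rank = 1 ↔ ∃! i, α i ≠ 0) := by
  intro ω w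
  have hs : s ≠ 0 := fun h => hω0 (by rw [h]; ring)
  have h1' : s ^ 2 - 1 ≠ 0 := sub_ne_zero.mpr hω1
  have hw0 : w 0 = ![1,0,0,0] := rfl
  have hw1 : w 1 = ![0,1,0,0] := rfl
  have hw2 : w 2 = ![0,0,1,0] := rfl
  have hw3 : w 3 = ![0,0,0,1] := rfl
  have hw4 : w 4 = ![1,1,1,1] := rfl
  have hw5 : w 5 = ![s^2,1,s^2,0] := rfl
  have hw6 : w 6 = ![s,s,0,s*(s^2)] := rfl
  have hsum : ∀ α : Fin 7 → F, (∑ k, α k • Matrix.vecMulVec (w k) (w k)) =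
      Matrix.of ![![α 0 + α 4 + α 5*s^4 + α 6*s^2, α 4 + α 5*s^2 + α 6*s^2, α 4 + α 5*s^4, α 4 + α 6*s^4],
         ![α 4 + α 5*s^2 + α 6*s^2, α 1 + α 4 + α 5 + α 6*s^2, α 4 + α 5*s^2, α 4 + α 6*s^4],
         ![α 4 + α 5*s^4, α 4 + α 5*s^2, α 2 + α 4 + α 5*s^4, α 4],
         ![α 4 + α 6*s^4, α 4 + α 6*s^4, α 4, α 3 + α 4 + α 6*s^6]] := by
    intro α
    ext i j
    simp only [Matrix.sum_apply, Matrix.smul_apply, Matrix.vecMulVec_apply, smul_eq_mul,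
      Fin.sum_univ_seven, hw0, hw1, hw2, hw3, hw4, hw5, hw6]
    fin_cases i <;> fin_cases j <;> simp <;> (try ring_nf) <;> (try tauto)
  constructor
  · rw [Fintype.linearIndependent_iff]
    intro g hg
    rw [hsum g] at hg
    have E := Matrix.ext_iff.mpr hg
    have h23 := E 2 3
    have h12 := E 1 2
    have h03 := E 0 3
    have h00 := E 0 0
    have h11 := E 1 1
    have h22 := E 2 2
    have h33 := E 3 3
    simp only [Matrix.of_apply, Matrix.cons_val_zero, Matrix.cons_val_one, Matrix.cons_val_two,
      Matrix.cons_val_three, Matrix.head_cons, Matrix.tail_cons, Matrix.zero_apply]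
      at h23 h12 h03 h00 h11 h22 h33
    have e4 : g 4 = 0 := h23
    have e5 : g 5 = 0 := by
      have key : g 5 * s ^ 2 = 0 := by linear_combination h12 - e4
      exact (mul_eq_zero.mp key).resolve_right hω0
    have e6 : g 6 = 0 := by
      have key : g 6 * s ^ 4 = 0 := by linear_combination h03 - e4
      exact (mul_eq_zero.mp key).resolve_right (pow_ne_zero 4 hs)
    have e0 : g 0 = 0 := by linear_combination h00 - e4 - s^4 * e5 - s^2 * e6
    have e1 : g 1 = 0 := by linear_combination h11 - e4 - e5 - s^2 * e6
    have e2 : g 2 = 0 := by linear_combination h22 - e4 - s^4 * e5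
    have e3 : g 3 = 0 := by linear_combination h33 - e4 - s^6 * e6
    intro i
    fin_cases i <;> assumption
  · intro α
    constructor
    · intro hrank
      rw [hsum α, aux_rank_eq_one_iff] at hrank
      obtain ⟨hN, hm⟩ := hrank
      by_cases he4 : α 4 = 0
      · by_cases hf5 : α 5 = 0
        · by_cases hg6 : α 6 = 0
          · -- diagonal case
            have m6 := hm 0 0 1 1
            have m7 := hm 0 0 2 2
            have m8 := hm 0 0 3 3
            have m9 := hm 1 1 2 2
            have m10 := hm 1 1 3 3
            have m11 := hm 2 2 3 3
            simp only [Matrix.of_apply, Matrix.cons_val_zero, Matrix.cons_val_one,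
              Matrix.cons_val_two, Matrix.cons_val_three, Matrix.head_cons, Matrix.tail_cons,
              he4, hf5, hg6, zero_mul, mul_zero, add_zero, zero_add]
              at m6 m7 m8 m9 m10 m11
            have hnz : ¬(α 0 = 0 ∧ α 1 = 0 ∧ α 2 = 0 ∧ α 3 = 0) := by
              rintro ⟨h0, h1, h2, h3⟩
              apply hN
              ext i j
              fin_cases i <;> fin_cases j <;>
                simp [h0, h1, h2, h3, he4, hf5, hg6, Matrix.vecHead, Matrix.vecTail]
            by_cases h0 : α 0 = 0
            · by_cases h1 : α 1 = 0
              · by_cases h2 : α 2 = 0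
                · have h3 : α 3 ≠ 0 := fun h3 => hnz ⟨h0, h1, h2, h3⟩
                  clear hm hN hnz m6 m7 m8 m9 m10 m11
                  refine ⟨3, h3, fun y hy => ?_⟩
                  fin_cases y
                  · exact absurd h0 hy
                  · exact absurd h1 hy
                  · exact absurd h2 hy
                  · rfl
                  · exact absurd he4 hy
                  · exact absurd hf5 hy
                  · exact absurd hg6 hy
                · have h3 : α 3 = 0 := by
                    have : α 2 * α 3 = 0 := by linear_combination m11
                    exact (mul_eq_zero.mp this).resolve_left h2
                  clear hm hN hnz m6 m7 m8 m9 m10 m11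
                  refine ⟨2, h2, fun y hy => ?_⟩
                  fin_cases y
                  · exact absurd h0 hy
                  · exact absurd h1 hy
                  · rfl
                  · exact absurd h3 hy
                  · exact absurd he4 hy
                  · exact absurd hf5 hy
                  · exact absurd hg6 hy
              · have h2 : α 2 = 0 := by
                  have : α 1 * α 2 = 0 := by linear_combination m9
                  exact (mul_eq_zero.mp this).resolve_left h1
                have h3 : α 3 = 0 := by
                  have : α 1 * α 3 = 0 := by linear_combination m10
                  exact (mul_eq_zero.mp this).resolve_left h1
                clear hm hN hnz m6 m7 m8 m9 m10 m11
                refine ⟨1, h1, fun y hy => ?_⟩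
                fin_cases y
                · exact absurd h0 hy
                · rfl
                · exact absurd h2 hy
                · exact absurd h3 hy
                · exact absurd he4 hy
                · exact absurd hf5 hy
                · exact absurd hg6 hy
            · have h1 : α 1 = 0 := by
                have : α 0 * α 1 = 0 := by linear_combination m6
                exact (mul_eq_zero.mp this).resolve_left h0
              have h2 : α 2 = 0 := by
                have : α 0 * α 2 = 0 := by linear_combination m7
                exact (mul_eq_zero.mp this).resolve_left h0
              have h3 : α 3 = 0 := by
                have : α 0 * α 3 = 0 := by linear_combination m8
                exact (mul_eq_zero.mp this).resolve_left h0
              clear hm hN hnz m6 m7 m8 m9 m10 m11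
              refine ⟨0, h0, fun y hy => ?_⟩
              fin_cases y
              · rfl
              · exact absurd h1 hy
              · exact absurd h2 hy
              · exact absurd h3 hy
              · exact absurd he4 hy
              · exact absurd hf5 hy
              · exact absurd hg6 hy
          · -- case g ≠ 0 (α 6 ≠ 0), α 4 = α 5 = 0
            have m14 := hm 2 2 0 3
            have m15 := hm 0 0 1 3
            have m16 := hm 0 1 1 3
            have m17 := hm 0 0 3 3
            simp only [Matrix.of_apply, Matrix.cons_val_zero, Matrix.cons_val_one,
              Matrix.cons_val_two, Matrix.cons_val_three, Matrix.head_cons, Matrix.tail_cons,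
              he4, hf5, zero_mul, mul_zero, add_zero, zero_add]
              at m14 m15 m16 m17
            have hc2 : α 2 = 0 := by
              have key : α 2 * (α 6 * s ^ 4) = 0 := by linear_combination m14
              exact (mul_eq_zero.mp key).resolve_right (mul_ne_zero hg6 (pow_ne_zero 4 hs))
            have ha0 : α 0 = 0 := by
              have key : α 0 * (α 6 * s ^ 4) = 0 := by linear_combination m15
              exact (mul_eq_zero.mp key).resolve_right (mul_ne_zero hg6 (pow_ne_zero 4 hs))
            have hb1 : α 1 = 0 := by
              have key : α 1 * (α 6 * s ^ 4) = 0 := by linear_combination -(1:F) * m16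
              exact (mul_eq_zero.mp key).resolve_right (mul_ne_zero hg6 (pow_ne_zero 4 hs))
            have hd3 : α 3 = 0 := by
              have key : α 3 * (α 6 * s ^ 2) = 0 := by linear_combination m17 - (α 3 + α 6 * s^6) * ha0
              exact (mul_eq_zero.mp key).resolve_right (mul_ne_zero hg6 hω0)
            clear hm hN m14 m15 m16 m17
            refine ⟨6, hg6, fun y hy => ?_⟩
            fin_cases y
            · exact absurd ha0 hy
            · exact absurd hb1 hy
            · exact absurd hc2 hy
            · exact absurd hd3 hy
            · exact absurd he4 hy
            · exact absurd hf5 hy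
            · rfl
        · -- case f ≠ 0 (α 5 ≠ 0), α 4 = 0
          have m9 := hm 2 0 0 3
          have m10 := hm 2 0 3 3
          have m11 := hm 0 1 1 2
          have m12 := hm 0 1 2 2
          have m13 := hm 0 0 1 2
          simp only [Matrix.of_apply, Matrix.cons_val_zero, Matrix.cons_val_one,
            Matrix.cons_val_two, Matrix.cons_val_three, Matrix.head_cons, Matrix.tail_cons,
            he4, zero_mul, mul_zero, add_zero, zero_add]
            at m9 m10 m11 m12 m13
          have hg6 : α 6 = 0 := by
            have key : α 6 * (α 5 * s ^ 8) = 0 := by linear_combination m9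
            exact (mul_eq_zero.mp key).resolve_right (mul_ne_zero hf5 (pow_ne_zero 8 hs))
          have hd3 : α 3 = 0 := by
            have key : α 3 * (α 5 * s ^ 4) = 0 := by
              linear_combination m10 - α 5 * s ^ 10 * hg6
            exact (mul_eq_zero.mp key).resolve_right (mul_ne_zero hf5 (pow_ne_zero 4 hs))
          have hb1 : α 1 = 0 := by
            have key : α 1 * (α 5 * s ^ 4) = 0 := by
              linear_combination -(1:F) * m11 + (α 5 * s^4 - α 5 * s^6) * hg6
            exact (mul_eq_zero.mp key).resolve_right (mul_ne_zero hf5 (pow_ne_zero 4 hs))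
          have hc2 : α 2 = 0 := by
            have key : α 2 * (α 5 * s ^ 2) = 0 := by
              linear_combination m12 - (α 2 * s^2 + α 5 * s^6) * hg6
            exact (mul_eq_zero.mp key).resolve_right (mul_ne_zero hf5 hω0)
          have ha0 : α 0 = 0 := by
            have key : α 0 * (α 5 * s ^ 2) = 0 := by
              linear_combination m13 + (α 5 * s^6 - α 5 * s^4) * hg6
            exact (mul_eq_zero.mp key).resolve_right (mul_ne_zero hf5 hω0)
          clear hm hN m9 m10 m11 m12 m13
          refine ⟨5, hf5, fun y hy => ?_⟩
          fin_cases y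
          · exact absurd ha0 hy
          · exact absurd hb1 hy
          · exact absurd hc2 hy
          · exact absurd hd3 hy
          · exact absurd he4 hy
          · rfl
          · exact absurd hg6 hy
      · -- case e ≠ 0 (α 4 ≠ 0)
        have m1 := hm 0 0 3 2
        have m2 := hm 0 1 3 2
        have m3 := hm 2 2 3 0
        have m4 := hm 2 2 3 1
        have m5 := hm 0 0 2 3
        have m6 := hm 0 0 1 1
        have m7 := hm 0 0 2 2
        have m8 := hm 2 2 3 3
        simp only [Matrix.of_apply, Matrix.cons_val_zero, Matrix.cons_val_one,
          Matrix.cons_val_two, Matrix.cons_val_three, Matrix.head_cons, Matrix.tail_cons]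
          at m1 m2 m3 m4 m5 m6 m7 m8
        have hf5 : α 5 = 0 := by
          have key : α 5 * (α 4 * (s ^ 2 * (s ^ 2 - 1))) = 0 := by
            linear_combination m4 - m3
          exact (mul_eq_zero.mp key).resolve_right
            (mul_ne_zero he4 (mul_ne_zero hω0 h1'))
        simp only [hf5, zero_mul, mul_zero, add_zero, zero_add] at m1 m2 m5 m6 m7 m8
        have ha0 : α 0 = 0 := by
          have key : α 0 * α 4 = 0 := by linear_combination m1 - m2
          exact (mul_eq_zero.mp key).resolve_right he4
        simp only [ha0, zero_mul, mul_zero, add_zero, zero_add] at m5 m6 m7 m8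
        have hg6 : α 6 = 0 := by
          have key : α 6 * (α 4 * (s ^ 2 * (s ^ 2 - 1))) = 0 := by
            linear_combination -(1:F) * m5
          exact (mul_eq_zero.mp key).resolve_right
            (mul_ne_zero he4 (mul_ne_zero hω0 h1'))
        simp only [hg6, zero_mul, mul_zero, add_zero, zero_add] at m6 m7 m8
        have hb1 : α 1 = 0 := by
          have key : α 1 * α 4 = 0 := by linear_combination m6
          exact (mul_eq_zero.mp key).resolve_right he4
        have hc2 : α 2 = 0 := by
          have key : α 2 * α 4 = 0 := by linear_combination m7
          exact (mul_eq_zero.mp key).resolve_right he4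
        simp only [hc2, zero_mul, mul_zero, add_zero, zero_add] at m8
        have hd3 : α 3 = 0 := by
          have key : α 3 * α 4 = 0 := by linear_combination m8
          exact (mul_eq_zero.mp key).resolve_right he4
        clear hm hN m1 m2 m3 m4 m5 m6 m7 m8
        refine ⟨4, he4, fun y hy => ?_⟩
        fin_cases y
        · exact absurd ha0 hy
        · exact absurd hb1 hy
        · exact absurd hc2 hy
        · exact absurd hd3 hy
        · rfl
        · exact absurd hf5 hy
        · exact absurd hg6 hy
    · rintro ⟨i, hi, hu⟩
      have hz : ∀ j, j ≠ i → α j = 0 := fun j hj => by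
        by_contra h
        exact hj (hu j h)
      have hcol : (∑ k, α k • Matrix.vecMulVec (w k) (w k))
          = Matrix.vecMulVec (α i • w i) (w i) := by
        rw [Finset.sum_eq_single i (fun b _ hb => by rw [hz b hb, zero_smul]) (by simp)]
        ext p q
        simp [Matrix.vecMulVec_apply, mul_assoc]
      rw [hcol, aux_rank_eq_one_iff]
      refine ⟨?_, fun p q r t => by simp only [Matrix.vecMulVec_apply]; ring⟩
      intro hzero
      apply hi
      fin_cases i
      · have h' := congrFun (congrFun hzero 0) 0
        simpa [Matrix.vecMulVec_apply, hw0] using h'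
      · have h' := congrFun (congrFun hzero 1) 1
        simpa [Matrix.vecMulVec_apply, hw1] using h'
      · have h' := congrFun (congrFun hzero 2) 2
        simpa [Matrix.vecMulVec_apply, hw2] using h'
      · have h' := congrFun (congrFun hzero 3) 3
        simpa [Matrix.vecMulVec_apply, hw3] using h'
      · have h' := congrFun (congrFun hzero 0) 0
        simpa [Matrix.vecMulVec_apply, hw4] using h'
      · have h' := congrFun (congrFun hzero 1) 1
        simpa [Matrix.vecMulVec_apply, hw5] using h'
      · have h' := congrFun (congrFun hzero 0) 0
        simpa [Matrix.vecMulVec_apply, hw6, hs] using h'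
end

section
/- Let F be a finite field and let ω ∈ F with ω ∉ {0, 1, −1}. In Fin 4 → F, set w₁ = (1,0,0,0), w₂ = (0,1,0,0), w₃ = (0,0,1,0), w₄ = (0,0,0,1), w₅ = (0,1,1,1), w₆ = (1,ω,ω,ω²), w₇ = (1,ω,1,ω). Then: (a) the seven 4×4 matrices w₁w₁ᵀ, …, w₇w₇ᵀ are linearly independent over F; and (b) for all (a,b,c,d,e,f,g) ∈ F⁷, the matrix a•w₁w₁ᵀ + b•w₂w₂ᵀ + c•w₃w₃ᵀ + d•w₄w₄ᵀ + e•w₅w₅ᵀ + f•w₆w₆ᵀ + g•w₇w₇ᵀ has rank exactly 1 if and only if exactly one of a, b, c, d, e, f, g is nonzero. -/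
private lemma cancel0 {F : Type*} [Field F] {x y : F} (h : x * y = 0) (hy : y ≠ 0) : x = 0 :=
  (mul_eq_zero.mp h).resolve_right hy

private lemma uniq_of {F : Type*} [Field F] (α : Fin 7 → F) (i : Fin 7) (hi : α i ≠ 0)
    (hz : ∀ j, j ≠ i → α j = 0) : ∃! k, α k ≠ 0 :=
  ⟨i, hi, fun j hj => by by_contra hne; exact hj (hz j hne)⟩

private lemma minors_of_rank_le_one {F : Type*} [Field F] {n : Type*} [Fintype n] [DecidableEq n]
    (M : Matrix n n F) (h : M.rank ≤ 1) (i j k l : n) :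
    M i k * M j l = M i l * M j k := by
  have h' : Module.finrank F ↥(LinearMap.range M.mulVecLin) ≤ 1 := h
  have hprin := (Submodule.finrank_le_one_iff_isPrincipal _).mp h'
  obtain ⟨v, hv⟩ := hprin.principal
  have col : ∀ k : n, (fun r => M r k) ∈ LinearMap.range M.mulVecLin := by
    intro k
    exact ⟨Pi.single k 1, by ext r; simp [Matrix.mulVecLin_apply, Matrix.mulVec_single]⟩
  obtain ⟨ck, hck⟩ := Submodule.mem_span_singleton.mp (hv ▸ col k)
  obtain ⟨cl, hcl⟩ := Submodule.mem_span_singleton.mp (hv ▸ col l)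
  have e1 : ∀ r, M r k = ck * v r := fun r => by rw [← congr_fun hck r]; simp
  have e2 : ∀ r, M r l = cl * v r := fun r => by rw [← congr_fun hcl r]; simp
  rw [e1 i, e2 j, e2 i, e1 j]; ring

private lemma rank_vecMulVec_one {F : Type*} [Field F] {m n : Type*} [Fintype m] [Fintype n]
    [DecidableEq n] (u : m → F) (v : n → F) (hu : u ≠ 0) (hv : v ≠ 0) :
    (Matrix.vecMulVec u v).rank = 1 := by
  have hmv : ∀ x, (Matrix.vecMulVec u v).mulVecLin x = (dotProduct v x) • u := by
    intro x; ext r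
    simp only [Matrix.mulVecLin_apply, Matrix.mulVec, dotProduct,
      Matrix.vecMulVec_apply, Pi.smul_apply, smul_eq_mul, Finset.sum_mul, Matrix.of_apply]
    exact Finset.sum_congr rfl fun j _ => by ring
  have hrange : LinearMap.range (Matrix.vecMulVec u v).mulVecLin = Submodule.span F {u} := by
    apply le_antisymm
    · rintro y ⟨x, rfl⟩
      rw [hmv]
      exact Submodule.smul_mem _ _ (Submodule.mem_span_singleton_self u)
    · rw [Submodule.span_le, Set.singleton_subset_iff]
      obtain ⟨j, hj⟩ : ∃ j, v j ≠ 0 := by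
        by_contra hc; push_neg at hc; exact hv (funext hc)
      refine ⟨Pi.single j (v j)⁻¹, ?_⟩
      rw [hmv, dotProduct_single, mul_inv_cancel₀ hj, one_smul]
  unfold Matrix.rank
  rw [hrange, finrank_span_singleton hu]

/-- Over a finite field, for `ω ∉ {0,1,-1}`, the seven rank-one matrices built from
`e₁, e₂, e₃, e₄, e₂+e₃+e₄, e₁+ωe₂+ωe₃+ω²e₄, e₁+ωe₂+e₃+ωe₄` are linearly independent, and
a linear combination of them has rank exactly one iff exactly one coefficient is
nonzero. -/
theorem stmt6 (F : Type*) [Field F] [Fintype F] (ω : F)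
    (hω0 : ω ≠ 0) (hω1 : ω ≠ 1) (hωm1 : ω ≠ -1) :
    let w : Fin 7 → (Fin 4 → F) :=
      ![![1,0,0,0], ![0,1,0,0], ![0,0,1,0], ![0,0,0,1],
        ![0,1,1,1], ![1,ω,ω,ω^2], ![1,ω,1,ω]]
    LinearIndependent F (fun i => Matrix.vecMulVec (w i) (w i)) ∧
    ∀ α : Fin 7 → F,
      ((∑ i, α i • Matrix.vecMulVec (w i) (w i)).rank = 1 ↔ ∃! i, α i ≠ 0) := by
  intro w
  have hw0 : w 0 = ![1,0,0,0] := rfl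
  have hw1 : w 1 = ![0,1,0,0] := rfl
  have hw2 : w 2 = ![0,0,1,0] := rfl
  have hw3 : w 3 = ![0,0,0,1] := rfl
  have hw4 : w 4 = ![0,1,1,1] := rfl
  have hw5 : w 5 = ![1,ω,ω,ω^2] := rfl
  have hw6 : w 6 = ![1,ω,1,ω] := rfl
  have hω1' : (1 : F) - ω ≠ 0 := sub_ne_zero.mpr (Ne.symm hω1)
  constructor
  · rw [Fintype.linearIndependent_iff]
    intro γ hγ
    have h01 := congr_fun (congr_fun hγ 0) 1
    have h02 := congr_fun (congr_fun hγ 0) 2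
    have h12 := congr_fun (congr_fun hγ 1) 2
    have h00 := congr_fun (congr_fun hγ 0) 0
    have h11 := congr_fun (congr_fun hγ 1) 1
    have h22 := congr_fun (congr_fun hγ 2) 2
    have h33 := congr_fun (congr_fun hγ 3) 3
    simp only [Fin.sum_univ_seven, Matrix.sum_apply, Matrix.smul_apply, Matrix.vecMulVec_apply,
      hw0, hw1, hw2, hw3, hw4, hw5, hw6, Matrix.cons_val_zero, Matrix.cons_val_one,
      Matrix.cons_val_two, Matrix.cons_val_three, Matrix.head_cons, Matrix.tail_cons,
      smul_eq_mul, mul_zero, zero_mul, mul_one, one_mul, add_zero, zero_add,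
      Matrix.zero_apply, Pi.zero_apply] at h01 h02 h12 h00 h11 h22 h33
    have hg : γ 6 = 0 := by
      refine cancel0 (show γ 6 * (ω - 1) = 0 from ?_) (sub_ne_zero.mpr hω1)
      linear_combination h01 - h02
    rw [hg] at h02 h12 h00 h11 h22 h33
    have hf : γ 5 = 0 := by
      refine cancel0 (show γ 5 * ω = 0 from ?_) hω0
      linear_combination h02
    rw [hf] at h12 h00 h11 h22 h33
    have he : γ 4 = 0 := by linear_combination h12
    rw [he] at h11 h22 h33
    have ha : γ 0 = 0 := by linear_combination h00
    have hb : γ 1 = 0 := by linear_combination h11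
    have hc : γ 2 = 0 := by linear_combination h22
    have hd : γ 3 = 0 := by linear_combination h33
    intro i; fin_cases i <;> assumption
  · intro α
    constructor
    · intro hrank
      have key := minors_of_rank_le_one _ hrank.le
      have h1 := key 0 1 2 3
      have h2 := key 0 2 1 3
      have h3 := key 0 3 1 2
      have h4 := key 0 1 0 2
      have h5 := key 0 1 0 1
      have h6 := key 0 2 0 2
      have h7 := key 0 3 0 3
      have h8 := key 1 2 1 2
      have h9 := key 1 3 1 3
      have h10 := key 2 3 2 3
      have h11 := key 1 2 1 3
      have h12 := key 1 2 2 3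
      have h13 := key 1 3 2 3
      have h14 := key 0 1 1 2
      have h15 := key 0 2 1 2
      simp only [Fin.sum_univ_seven, Matrix.sum_apply, Matrix.smul_apply, Matrix.vecMulVec_apply,
        hw0, hw1, hw2, hw3, hw4, hw5, hw6, Matrix.cons_val_zero, Matrix.cons_val_one,
        Matrix.cons_val_two, Matrix.cons_val_three, Matrix.head_cons, Matrix.tail_cons,
        smul_eq_mul, mul_zero, zero_mul, mul_one, one_mul, add_zero, zero_add]
        at h1 h2 h3 h4 h5 h6 h7 h8 h9 h10 h11 h12 h13 h14 h15
      have E1 : α 4 * (α 5 * ω + α 6) = 0 := by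
        refine cancel0 (show α 4 * (α 5 * ω + α 6) * (1 - ω) = 0 from ?_) hω1'
        linear_combination h1
      have E2 : α 5 * (α 4 + α 6 * (ω * (1 - ω))) = 0 := by
        refine cancel0 (show α 5 * (α 4 + α 6 * (ω * (1 - ω))) * (ω * (1 - ω)) = 0 from ?_)
          (mul_ne_zero hω0 hω1')
        linear_combination h2
      have E3 : α 6 * (α 5 * (ω ^ 2 * (1 - ω)) - α 4) = 0 := by
        refine cancel0 (show α 6 * (α 5 * (ω ^ 2 * (1 - ω)) - α 4) * (1 - ω) = 0 from ?_) hω1'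
        linear_combination h3
      rcases eq_or_ne (α 5) 0 with hf | hf
      · rcases eq_or_ne (α 6) 0 with hg | hg
        · rcases eq_or_ne (α 4) 0 with he | he
          · -- diagonal case
            rw [hf, hg, he] at h5 h6 h7 h8 h9 h10
            have hab : α 0 * α 1 = 0 := by linear_combination h5
            have hac : α 0 * α 2 = 0 := by linear_combination h6
            have had : α 0 * α 3 = 0 := by linear_combination h7
            have hbc : α 1 * α 2 = 0 := by linear_combination h8
            have hbd : α 1 * α 3 = 0 := by linear_combination h9
            have hcd : α 2 * α 3 = 0 := by linear_combination h10
            have hM0 : ¬ (∀ j, α j = 0) := by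
              intro hall
              have hzero : (∑ i, α i • Matrix.vecMulVec (w i) (w i)) = 0 := by
                simp [hall]
              rw [hzero, Matrix.rank_zero] at hrank
              exact zero_ne_one hrank
            rcases eq_or_ne (α 0) 0 with ha | ha
            · rcases eq_or_ne (α 1) 0 with hb | hb
              · rcases eq_or_ne (α 2) 0 with hc | hc
                · rcases eq_or_ne (α 3) 0 with hd | hd
                  · exact absurd (fun j => by fin_cases j <;> assumption) hM0
                  · exact uniq_of α 3 hd (by
                      intro j hj; fin_cases j <;> first | exact absurd rfl hj | assumption)
                · have hd : α 3 = 0 := cancel0 (by linear_combination hcd) hc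
                  exact uniq_of α 2 hc (by
                    intro j hj; fin_cases j <;> first | exact absurd rfl hj | assumption)
              · have hc : α 2 = 0 := by
                  have := cancel0 (show α 2 * α 1 = 0 by linear_combination hbc) hb
                  exact this
                have hd : α 3 = 0 := by
                  have := cancel0 (show α 3 * α 1 = 0 by linear_combination hbd) hb
                  exact this
                exact uniq_of α 1 hb (by
                  intro j hj; fin_cases j <;> first | exact absurd rfl hj | assumption)
            · have hb : α 1 = 0 := by
                have := cancel0 (show α 1 * α 0 = 0 by linear_combination hab) ha
                exact this
              have hc : α 2 = 0 := by
                have := cancel0 (show α 2 * α 0 = 0 by linear_combination hac) ha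
                exact this
              have hd : α 3 = 0 := by
                have := cancel0 (show α 3 * α 0 = 0 by linear_combination had) ha
                exact this
              exact uniq_of α 0 ha (by
                intro j hj; fin_cases j <;> first | exact absurd rfl hj | assumption)
          · -- e ≠ 0 case
            rw [hf, hg] at h11 h12 h13 h5
            have hb : α 1 = 0 := cancel0 (show α 1 * α 4 = 0 by linear_combination h11) he
            have hc : α 2 = 0 := cancel0 (show α 2 * α 4 = 0 by linear_combination -h12) he
            have hd : α 3 = 0 := cancel0 (show α 3 * α 4 = 0 by linear_combination h13) he
            rw [hb] at h5
            have ha : α 0 = 0 := cancel0 (show α 0 * α 4 = 0 by linear_combination h5) he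
            exact uniq_of α 4 he (by
              intro j hj; fin_cases j <;> first | exact absurd rfl hj | assumption)
        · -- g ≠ 0 case (f = 0)
          rw [hf] at E1
          have he : α 4 = 0 := cancel0 (show α 4 * α 6 = 0 by linear_combination E1) hg
          rw [hf, he] at h4 h14 h6 h7
          have ha : α 0 = 0 :=
            cancel0 (show α 0 * (α 6 * ω) = 0 by linear_combination h4) (mul_ne_zero hg hω0)
          have hb : α 1 = 0 := cancel0 (show α 1 * α 6 = 0 by linear_combination -h14) hg
          rw [ha] at h6 h7
          have hc : α 2 = 0 := cancel0 (show α 2 * α 6 = 0 by linear_combination h6) hg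
          have hd : α 3 = 0 := cancel0 (show α 3 * α 6 = 0 by linear_combination h7) hg
          exact uniq_of α 6 hg (by
            intro j hj; fin_cases j <;> first | exact absurd rfl hj | assumption)
      · rcases eq_or_ne (α 6) 0 with hg | hg
        · -- f ≠ 0 case (g = 0)
          rw [hg] at E1
          have he : α 4 = 0 :=
            cancel0 (show α 4 * (α 5 * ω) = 0 by linear_combination E1) (mul_ne_zero hf hω0)
          rw [hg, he] at h4 h14 h15 h7
          have ha : α 0 = 0 :=
            cancel0 (show α 0 * (α 5 * ω ^ 2) = 0 by linear_combination h4)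
              (mul_ne_zero hf (pow_ne_zero 2 hω0))
          have hb : α 1 = 0 :=
            cancel0 (show α 1 * (α 5 * ω) = 0 by linear_combination -h14) (mul_ne_zero hf hω0)
          have hc : α 2 = 0 :=
            cancel0 (show α 2 * (α 5 * ω) = 0 by linear_combination h15) (mul_ne_zero hf hω0)
          rw [ha] at h7
          have hd : α 3 = 0 := cancel0 (show α 3 * α 5 = 0 by linear_combination h7) hf
          exact uniq_of α 5 hf (by
            intro j hj; fin_cases j <;> first | exact absurd rfl hj | assumption)
        · -- f ≠ 0 and g ≠ 0: contradiction
          exfalso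
          have hr' : α 4 + α 6 * (ω * (1 - ω)) = 0 := (mul_eq_zero.mp E2).resolve_left hf
          have hs' : α 5 * (ω ^ 2 * (1 - ω)) - α 4 = 0 := (mul_eq_zero.mp E3).resolve_left hg
          have hA : α 5 * ω + α 6 = 0 := by
            refine cancel0 (show (α 5 * ω + α 6) * (ω * (1 - ω)) = 0 from ?_)
              (mul_ne_zero hω0 hω1')
            linear_combination hr' + hs'
          have hA' : α 6 = -(α 5 * ω) := by linear_combination hA
          have hB' : α 4 = α 5 * (ω ^ 2 * (1 - ω)) := by linear_combination -hs'
          rw [hA', hB'] at h4 h5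
          have hC : (α 0 + α 5 * (1 - ω)) * (α 5 * (ω ^ 2 * (1 - ω))) = 0 := by
            linear_combination h4
          have hD' : α 0 = -(α 5 * (1 - ω)) := by
            have := cancel0 hC (mul_ne_zero hf (mul_ne_zero (pow_ne_zero 2 hω0) hω1'))
            linear_combination this
          rw [hD'] at h5
          have hsq : (α 5 * (ω * (1 - ω))) ^ 2 = 0 := by linear_combination -h5
          exact (mul_ne_zero hf (mul_ne_zero hω0 hω1'))
            ((pow_eq_zero_iff (two_ne_zero)).mp hsq)
    · rintro ⟨i, hi, huni⟩
      have hz : ∀ j, j ≠ i → α j = 0 := fun j hj => by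
        by_contra h; exact hj (huni j h)
      have hsum : (∑ j, α j • Matrix.vecMulVec (w j) (w j))
          = Matrix.vecMulVec (α i • w i) (w i) := by
        rw [Finset.sum_eq_single_of_mem i (Finset.mem_univ i)
          (fun j _ hj => by rw [hz j hj, zero_smul])]
        ext r s
        simp [Matrix.vecMulVec_apply, Matrix.smul_apply, Pi.smul_apply, smul_eq_mul, mul_assoc]
      rw [hsum]
      have hne1 : ∃ c, w i c = 1 := by
        fin_cases i
        exacts [⟨0, rfl⟩, ⟨1, rfl⟩, ⟨2, rfl⟩, ⟨3, rfl⟩, ⟨1, rfl⟩, ⟨0, rfl⟩, ⟨0, rfl⟩]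
      have hwk : w i ≠ 0 := by
        intro h0
        obtain ⟨c, hc⟩ := hne1
        rw [h0] at hc
        exact one_ne_zero (α := F) (by simpa using hc.symm)
      exact rank_vecMulVec_one _ _ (smul_ne_zero hi hwk) hwk
end

section
/- Let F be a finite field, let ω ∈ F with ω ∉ {0, 1, −1}, and let K be an algebraic closure of F. Then the polynomial P_ω(X,Y) = (ω−1)²·X²Y + ω·Y + (ω−1)²·ω·XY² + ω²·X + (ω−1)²·(ω+1)·XY, regarded (via the embedding F → K) as an element of the polynomial ring K[X,Y] in two variables, is irreducible. -/
open Polynomial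

private lemma cq0 {R : Type*} [CommSemiring R] (α β γ : R) :
    (C α * X ^ 2 + C β * X + C γ).coeff 0 = γ := by simp
private lemma cq1 {R : Type*} [CommSemiring R] (α β γ : R) :
    (C α * X ^ 2 + C β * X + C γ).coeff 1 = β := by simp
private lemma cq2 {R : Type*} [CommSemiring R] (α β γ : R) :
    (C α * X ^ 2 + C β * X + C γ).coeff 2 = α := by simp
private lemma cqtop {R : Type*} [CommSemiring R] (α β γ : R) (n : ℕ) (hn : 2 < n) :
    (C α * X ^ 2 + C β * X + C γ).coeff n = 0 := by
  have h1 : n ≠ 2 := by omega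
  have h2 : n ≠ 1 := by omega
  have h3 : n ≠ 0 := by omega
  simp [coeff_X, coeff_X_pow, coeff_C, h1, h2, h3, Ne.symm h2]
private lemma linq {R : Type*} [CommSemiring R] (a : R) :
    C a * X = C 0 * X ^ 2 + C a * X + C 0 := by simp
private lemma quad_add {R : Type*} [CommRing R] (a1 b1 c1 a2 b2 c2 : R) :
    (C a1 * X ^ 2 + C b1 * X + C c1) + (C a2 * X ^ 2 + C b2 * X + C c2) =
      C (a1 + a2) * X ^ 2 + C (b1 + b2) * X + C (c1 + c2) := by
  simp only [C_add]; ring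

private lemma lin_mul_lin {R : Type*} [CommRing R] (p1 p0 r1 r0 : R) :
    (C p1 * X + C p0) * (C r1 * X + C r0) =
      C (p1 * r1) * X ^ 2 + C (p1 * r0 + p0 * r1) * X + C (p0 * r0) := by
  simp only [C_mul, C_add]; ring

-- scalar core
private lemma scalarCore {K : Type*} [Field K] {a c p0 p1 q0 q1 r0 r1 s0 s1 : K}
    (ha : a ≠ 0) (hc : c ≠ 0) (hc1 : c + 1 ≠ 0)
    (e1a : p0*r0 = 0) (e1b : p0*r1 + p1*r0 = a) (e1c : p1*r1 = 0)
    (e2a : q0*s0 = 0) (e2b : q0*s1 + q1*s0 = c) (e2c : q1*s1 = 0)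
    (e3b : p0*s1 + p1*s0 + q0*r1 + q1*r0 = a*(c+1))
    (e3c : p1*s1 + q1*r1 = a*c) : False := by
  have hac : a * c ≠ 0 := mul_ne_zero ha hc
  have hac1 : a * (c+1) ≠ 0 := mul_ne_zero ha hc1
  rcases mul_eq_zero.mp e1c with hp1 | hr1
  · rcases mul_eq_zero.mp e2c with hq1 | hs1
    · rw [hp1, hq1, zero_mul, zero_mul, add_zero] at e3c; exact hac e3c.symm
    · -- p1 = 0, s1 = 0
      have hr1 : r1 ≠ 0 := by
        intro h; rw [hp1, hs1, h, mul_zero, mul_zero, add_zero] at e3c; exact hac e3c.symm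
      have hp0 : p0 ≠ 0 := by
        intro h; rw [h, hp1, zero_mul, zero_mul, add_zero] at e1b; exact ha e1b.symm
      have hr0 : r0 = 0 := by
        rcases mul_eq_zero.mp e1a with h | h
        · exact absurd h hp0
        · exact h
      have hs0 : s0 ≠ 0 := by
        intro h; rw [hs1, h, mul_zero, mul_zero, add_zero] at e2b; exact hc e2b.symm
      have hq0 : q0 = 0 := by
        rcases mul_eq_zero.mp e2a with h | h
        · exact h
        · exact absurd h hs0
      rw [hp1, hq0, hs1, hr0, mul_zero, zero_mul, zero_mul, mul_zero] at e3b
      simp only [add_zero, zero_add] at e3b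
      exact hac1 e3b.symm
  · rcases mul_eq_zero.mp e2c with hq1 | hs1
    · -- r1 = 0, q1 = 0
      have hp1 : p1 ≠ 0 := by
        intro h; rw [hr1, hq1, h, zero_mul, zero_mul, add_zero] at e3c; exact hac e3c.symm
      have hr0 : r0 ≠ 0 := by
        intro h; rw [hr1, h, mul_zero, mul_zero, add_zero] at e1b; exact ha e1b.symm
      have hp0 : p0 = 0 := by
        rcases mul_eq_zero.mp e1a with h | h
        · exact h
        · exact absurd h hr0
      have hs1' : s1 ≠ 0 := by
        intro h; rw [h, hq1, mul_zero, zero_mul, add_zero] at e2b; exact hc e2b.symm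
      have hs0 : s0 = 0 := by
        rcases mul_eq_zero.mp e2a with h | h
        · exfalso
          rw [h, hq1, zero_mul, zero_mul, add_zero] at e2b; exact hc e2b.symm
        · exact h
      rw [hp0, hq1, hr1, hs0, zero_mul, mul_zero, mul_zero, zero_mul] at e3b
      simp only [add_zero, zero_add] at e3b
      exact hac1 e3b.symm
    · rw [hr1, hs1, mul_zero, mul_zero, add_zero] at e3c; exact hac e3c.symm


private lemma quadIrred {K : Type*} [Field K] {a c : K} (ha : a ≠ 0) (hc : c ≠ 0)
    (hc1 : c + 1 ≠ 0) :
    Irreducible (C (C a * X) * X ^ 2 +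
      C (C (a * c) * X ^ 2 + C (a * (c + 1)) * X + C (c ^ 2)) * X + C (C c * X) :
      Polynomial (Polynomial K)) := by
  set B : Polynomial K := C (a * c) * X ^ 2 + C (a * (c + 1)) * X + C (c ^ 2) with hB
  set Q : Polynomial (Polynomial K) := C (C a * X) * X ^ 2 + C B * X + C (C c * X) with hQdef
  have hA : (C a * X : Polynomial K) ≠ 0 := mul_ne_zero (C_ne_zero.mpr ha) X_ne_zero
  have hD : (C c * X : Polynomial K) ≠ 0 := mul_ne_zero (C_ne_zero.mpr hc) X_ne_zero
  have hQ2 : Q.coeff 2 = C a * X := cq2 _ _ _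
  have hQ1 : Q.coeff 1 = B := cq1 _ _ _
  have hQ0 : Q.coeff 0 = C c * X := cq0 _ _ _
  have hQne : Q ≠ 0 := fun h => hA (by rw [← hQ2, h, coeff_zero])
  have hdeg : Q.natDegree = 2 :=
    le_antisymm (natDegree_le_iff_coeff_eq_zero.mpr (cqtop _ _ _))
      (le_natDegree_of_ne_zero (hQ2 ▸ hA))
  have hBc0 : B.coeff 0 = c ^ 2 := cq0 _ _ _
  constructor
  · intro hu
    have := natDegree_eq_zero_of_isUnit hu
    omega
  · intro f g hfg
    have hf0 : f ≠ 0 := fun h => hQne (by rw [hfg, h, zero_mul])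
    have hg0 : g ≠ 0 := fun h => hQne (by rw [hfg, h, mul_zero])
    have hsum : f.natDegree + g.natDegree = 2 := by
      rw [← natDegree_mul hf0 hg0, ← hfg, hdeg]
    have aux : ∀ f g : Polynomial (Polynomial K), Q = f * g → f.natDegree = 0 → IsUnit f := by
      intro f g hfg hdf
      have hfC : f = C (f.coeff 0) := eq_C_of_natDegree_eq_zero hdf
      set u := f.coeff 0 with hu
      have h1 : u * g.coeff 1 = B := by rw [← hQ1, hfg, hfC, coeff_C_mul]
      have h0 : u * g.coeff 0 = C c * X := by rw [← hQ0, hfg, hfC, coeff_C_mul]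
      have hu0 : u.coeff 0 ≠ 0 := by
        intro h
        have h' := congrArg (fun z => coeff z 0) h1
        simp only [mul_coeff_zero, h, zero_mul, hBc0] at h'
        exact pow_ne_zero 2 hc h'.symm
      have hune : u ≠ 0 := fun h => hu0 (by rw [h, coeff_zero])
      have hvne : g.coeff 0 ≠ 0 := fun h => hD (by rw [← h0, h, mul_zero])
      have hsum2 : u.natDegree + (g.coeff 0).natDegree = 1 := by
        rw [← natDegree_mul hune hvne, h0, natDegree_C_mul_X c hc]
      rcases Nat.eq_zero_or_pos u.natDegree with h | h
      · rw [hfC, eq_C_of_natDegree_eq_zero h]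
        exact isUnit_C.mpr (isUnit_C.mpr (isUnit_iff_ne_zero.mpr hu0))
      · exfalso
        have hv0 : (g.coeff 0).natDegree = 0 := by omega
        have hvC : g.coeff 0 = C ((g.coeff 0).coeff 0) := eq_C_of_natDegree_eq_zero hv0
        have h' : u.coeff 0 * (g.coeff 0).coeff 0 = 0 := by
          have h'' := congrArg (fun z => coeff z 0) h0
          simpa [mul_coeff_zero] using h''
        have hv00 : (g.coeff 0).coeff 0 = 0 := by
          rcases mul_eq_zero.mp h' with h'' | h''
          · exact absurd h'' hu0
          · exact h''
        exact hvne (by rw [hvC, hv00, map_zero])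
    have hcase : f.natDegree = 0 ∨ (f.natDegree = 1 ∧ g.natDegree = 1) ∨ g.natDegree = 0 := by
      omega
    rcases hcase with h | ⟨hdf, hdg⟩ | h
    · exact Or.inl (aux f g hfg h)
    · exfalso
      set p := f.coeff 1 with hp
      set q := f.coeff 0 with hq
      set r := g.coeff 1 with hr
      set s := g.coeff 0 with hs
      have hf : f = C p * X + C q := eq_X_add_C_of_natDegree_le_one hdf.le
      have hg : g = C r * X + C s := eq_X_add_C_of_natDegree_le_one hdg.le
      have hexp : Q = C (p * r) * X ^ 2 + C (p * s + q * r) * X + C (q * s) := by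
        rw [hfg, hf, hg, lin_mul_lin]
      have e2 : p * r = C a * X := by
        have h := congrArg (fun z => coeff z 2) hexp
        simp only [hQ2, cq2] at h
        exact h.symm ▸ h
      have e1 : p * s + q * r = B := by
        have h := congrArg (fun z => coeff z 1) hexp
        simp only [hQ1, cq1] at h
        exact h.symm ▸ h
      have e0 : q * s = C c * X := by
        have h := congrArg (fun z => coeff z 0) hexp
        simp only [hQ0, cq0] at h
        exact h.symm ▸ h
      have hpne : p ≠ 0 := fun h => hA (by rw [← e2, h, zero_mul])
      have hrne : r ≠ 0 := fun h => hA (by rw [← e2, h, mul_zero])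
      have hqne : q ≠ 0 := fun h => hD (by rw [← e0, h, zero_mul])
      have hsne : s ≠ 0 := fun h => hD (by rw [← e0, h, mul_zero])
      have hpr : p.natDegree + r.natDegree = 1 := by
        rw [← natDegree_mul hpne hrne, e2, natDegree_C_mul_X a ha]
      have hqs : q.natDegree + s.natDegree = 1 := by
        rw [← natDegree_mul hqne hsne, e0, natDegree_C_mul_X c hc]
      have hpl : p = C (p.coeff 1) * X + C (p.coeff 0) :=
        eq_X_add_C_of_natDegree_le_one (by omega)
      have hrl : r = C (r.coeff 1) * X + C (r.coeff 0) :=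
        eq_X_add_C_of_natDegree_le_one (by omega)
      have hql : q = C (q.coeff 1) * X + C (q.coeff 0) :=
        eq_X_add_C_of_natDegree_le_one (by omega)
      have hsl : s = C (s.coeff 1) * X + C (s.coeff 0) :=
        eq_X_add_C_of_natDegree_le_one (by omega)
      rw [hpl, hrl, lin_mul_lin, linq a] at e2
      rw [hql, hsl, lin_mul_lin, linq c] at e0
      rw [hpl, hql, hrl, hsl, lin_mul_lin, lin_mul_lin, quad_add, hB] at e1
      have e1a : p.coeff 0 * r.coeff 0 = 0 := by
        have h := congrArg (fun z => coeff z 0) e2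
        simpa only [cq0] using h
      have e1b : p.coeff 0 * r.coeff 1 + p.coeff 1 * r.coeff 0 = a := by
        have h := congrArg (fun z => coeff z 1) e2
        simp only [cq1] at h
        linear_combination h
      have e1c : p.coeff 1 * r.coeff 1 = 0 := by
        have h := congrArg (fun z => coeff z 2) e2
        simpa only [cq2] using h
      have e2a : q.coeff 0 * s.coeff 0 = 0 := by
        have h := congrArg (fun z => coeff z 0) e0
        simpa only [cq0] using h
      have e2b : q.coeff 0 * s.coeff 1 + q.coeff 1 * s.coeff 0 = c := by
        have h := congrArg (fun z => coeff z 1) e0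
        simp only [cq1] at h
        linear_combination h
      have e2c : q.coeff 1 * s.coeff 1 = 0 := by
        have h := congrArg (fun z => coeff z 2) e0
        simpa only [cq2] using h
      have e3b : p.coeff 0 * s.coeff 1 + p.coeff 1 * s.coeff 0
          + q.coeff 0 * r.coeff 1 + q.coeff 1 * r.coeff 0 = a * (c + 1) := by
        have h := congrArg (fun z => coeff z 1) e1
        simp only [cq1] at h
        linear_combination h
      have e3c : p.coeff 1 * s.coeff 1 + q.coeff 1 * r.coeff 1 = a * c := by
        have h := congrArg (fun z => coeff z 2) e1
        simp only [cq2] at h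
        linear_combination h
      exact scalarCore ha hc hc1 e1a e1b e1c e2a e2b e2c e3b e3c
    · exact Or.inr (aux g f (by rw [hfg, mul_comm]) h)

noncomputable def toPolyPoly (K : Type*) [CommRing K] :
    MvPolynomial (Fin 2) K ≃ₐ[K] Polynomial (Polynomial K) :=
  (MvPolynomial.finSuccEquiv K 1).trans <| Polynomial.mapAlgEquiv <|
    (MvPolynomial.finSuccEquiv K 0).trans <| Polynomial.mapAlgEquiv <|
      MvPolynomial.isEmptyAlgEquiv K (Fin 0)

lemma toPolyPoly_X0 (K : Type*) [CommRing K] :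
    toPolyPoly K (MvPolynomial.X 0) = Polynomial.X := by
  rw [toPolyPoly, AlgEquiv.trans_apply, MvPolynomial.finSuccEquiv_X_zero,
    Polynomial.coe_mapAlgEquiv, Polynomial.map_X]

lemma toPolyPoly_X1 (K : Type*) [CommRing K] :
    toPolyPoly K (MvPolynomial.X 1) = Polynomial.C Polynomial.X := by
  rw [toPolyPoly, AlgEquiv.trans_apply, show (1 : Fin 2) = Fin.succ 0 from rfl,
    MvPolynomial.finSuccEquiv_X_succ, Polynomial.coe_mapAlgEquiv, Polynomial.map_C]
  simp [MvPolynomial.finSuccEquiv_X_zero, Polynomial.coe_mapAlgEquiv]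

lemma toPolyPoly_C (K : Type*) [CommRing K] (k : K) :
    toPolyPoly K (MvPolynomial.C k) = Polynomial.C (Polynomial.C k) := by
  rw [show (MvPolynomial.C k : MvPolynomial (Fin 2) K) =
      algebraMap K (MvPolynomial (Fin 2) K) k from rfl, AlgEquiv.commutes,
    Polynomial.algebraMap_apply, Polynomial.algebraMap_apply]
  rfl

/-- Absolute irreducibility of the planar cubic from the paper's Lemma: over an algebraic
closure `K` of the finite field `F`, the polynomial
`(ω−1)²X²Y + ωY + (ω−1)²ωXY² + ω²X + (ω−1)²(ω+1)XY` is irreducible in `K[X,Y]`. -/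
theorem stmt8 (F : Type*) [Field F] [Fintype F] (ω : F)
    (hω0 : ω ≠ 0) (hω1 : ω ≠ 1) (hωm1 : ω ≠ -1)
    (K : Type*) [Field K] [Algebra F K] [IsAlgClosure F K] :
    Irreducible
      (letI c : K := algebraMap F K ω
       letI X : MvPolynomial (Fin 2) K := MvPolynomial.X 0
       letI Y : MvPolynomial (Fin 2) K := MvPolynomial.X 1
       MvPolynomial.C ((c - 1) ^ 2) * X ^ 2 * Y + MvPolynomial.C c * Y +
         MvPolynomial.C ((c - 1) ^ 2 * c) * X * Y ^ 2 + MvPolynomial.C (c ^ 2) * X +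
         MvPolynomial.C ((c - 1) ^ 2 * (c + 1)) * X * Y) := by
  set c : K := algebraMap F K ω with hcdef
  have hinj := (algebraMap F K).injective
  have hc : c ≠ 0 := fun h => hω0 (hinj (by rw [← hcdef, h, map_zero]))
  have hc1 : c - 1 ≠ 0 := by
    intro h
    exact hω1 (hinj (by rw [← hcdef, map_one, sub_eq_zero.mp h]))
  have hcm1 : c + 1 ≠ 0 := by
    intro h
    apply hωm1 (hinj _)
    rw [← hcdef, map_neg, map_one, eq_neg_iff_add_eq_zero, h]
  have ha : (c - 1) ^ 2 ≠ 0 := pow_ne_zero 2 hc1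
  have key := quadIrred (K := K) ha hc hcm1
  rw [← MulEquiv.irreducible_iff (toPolyPoly K)]
  have hmap : toPolyPoly K
      (MvPolynomial.C ((c - 1) ^ 2) * MvPolynomial.X 0 ^ 2 * MvPolynomial.X 1 +
        MvPolynomial.C c * MvPolynomial.X 1 +
        MvPolynomial.C ((c - 1) ^ 2 * c) * MvPolynomial.X 0 * MvPolynomial.X 1 ^ 2 +
        MvPolynomial.C (c ^ 2) * MvPolynomial.X 0 +
        MvPolynomial.C ((c - 1) ^ 2 * (c + 1)) * MvPolynomial.X 0 * MvPolynomial.X 1) =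
      (Polynomial.C (Polynomial.C ((c - 1) ^ 2) * Polynomial.X) * Polynomial.X ^ 2 +
        Polynomial.C (Polynomial.C ((c - 1) ^ 2 * c) * Polynomial.X ^ 2 +
          Polynomial.C ((c - 1) ^ 2 * (c + 1)) * Polynomial.X +
          Polynomial.C (c ^ 2)) * Polynomial.X +
        Polynomial.C (Polynomial.C c * Polynomial.X)) := by
    simp only [map_add, map_mul, map_pow, toPolyPoly_X0, toPolyPoly_X1, toPolyPoly_C]
    ring
  rw [hmap]
  exact key
end

section
/- Let F be a finite field of cardinality q and let Q be a nonzero quadratic form on the F-vector space Fin 4 → F. Let Z be the set of projective points [v] of the projective space of Fin 4 → F with Q(v) = 0. If Z has exactly 9 elements and Z is not contained in the projectivization of any 2-dimensional F-subspace of Fin 4 → F (i.e., the nine points are not all on one projective line), then q = 2. -/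
/-!
Let `q = |F|`. The nine projective points give `9(q - 1) + 1` zeros of `Q` in `F⁴`.

If some isotropic `e` is not in the radical of the polar form, put `φ = polar Q e`. Since
`Q (y + s e) = Q y + s φ y`, every line `y + F e` with `φ y ≠ 0` meets the zero set exactly once,
which accounts for `q²(q - 1)` zeros outside `ker φ`; as `0` and `e` are further zeros,
`q³ - q² + 2 ≤ 9q - 8`, so `q = 2`.

Otherwise every isotropic vector is radical, so the zeros of `Q` form a subspace of some
dimension `k`, and `q ^ k = 9q - 8` forces `k = 2`: the nine points lie on a line.
-/

open QuadraticMap Projectivization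
open scoped LinearAlgebra.Projectivization

lemma Nat.card_subtype_and_add_card_subtype_and_not {α : Type*} [Finite α] (p q : α → Prop) :
    Nat.card {x // p x ∧ q x} + Nat.card {x // p x ∧ ¬ q x} = Nat.card {x // p x} := by
  classical
  rw [← Nat.card_sum]
  exact Nat.card_congr <| (Equiv.sumCongr (Equiv.subtypeSubtypeEquivSubtypeInter p q).symm
    (Equiv.subtypeSubtypeEquivSubtypeInter p (¬ q ·)).symm).trans (Equiv.sumCompl _)

namespace Module.Dual

variable {K V : Type*} [Field K] [AddCommGroup V] [Module K V] {f : Module.Dual K V}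

lemma card_ker_mul_card (hf : f ≠ 0) : Nat.card (LinearMap.ker f) * Nat.card K = Nat.card V := by
  rw [Submodule.card_eq_card_quotient_mul_card (LinearMap.ker f),
    Nat.card_congr (f.quotKerEquivOfSurjective (LinearMap.surjective hf)).toEquiv]

lemma card_ne_zero_mul_card [Finite V] (hf : f ≠ 0) :
    Nat.card {x // f x ≠ 0} * Nat.card K = Nat.card V * (Nat.card K - 1) := by
  have hsplit : Nat.card (LinearMap.ker f) + Nat.card {x // f x ≠ 0} = Nat.card V := by
    classical
    rw [← Nat.card_sum]
    exact Nat.card_congr <|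
      (Equiv.sumCongr (Equiv.subtypeEquivRight fun _ ↦ LinearMap.mem_ker) (Equiv.refl _)).trans
        (Equiv.sumCompl _)
  have hker := card_ker_mul_card hf
  have hK : Nat.card K ≠ 0 := by
    intro h
    rw [h, mul_zero] at hker
    exact Nat.card_pos.ne hker
  obtain ⟨r, hr⟩ := Nat.exists_eq_succ_of_ne_zero hK
  rw [hr] at hker
  rw [hr, Nat.succ_sub_one]
  nlinarith

end Module.Dual

namespace QuadraticMap

section CommRing

variable {R M N : Type*} [CommRing R] [AddCommGroup M] [Module R M] [AddCommGroup N] [Module R N]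
  (Q : QuadraticMap R M N)

def isotropicSubmodule (h : ∀ x, Q x = 0 → ∀ y, polar Q x y = 0) : Submodule R M where
  carrier := {x | Q x = 0}
  add_mem' {x y} (hx : Q x = 0) (hy : Q y = 0) := show Q (x + y) = 0 by
    rw [QuadraticMap.map_add Q, hx, hy, h x hx y, add_zero, add_zero]
  zero_mem' := Q.map_zero
  smul_mem' c x (hx : Q x = 0) := show Q (c • x) = 0 by
    rw [QuadraticMap.map_smul, hx, smul_zero]

variable {e : M} (he : Q e = 0)
include he

lemma map_add_smul_of_isotropic (x : M) (s : R) : Q (x + s • e) = Q x + s • polar Q e x := by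
  rw [QuadraticMap.map_add Q, QuadraticMap.map_smul, he, smul_zero, add_zero, polar_smul_right,
    polar_comm]

lemma polar_add_smul_of_isotropic (x : M) (s : R) : polar Q e (x + s • e) = polar Q e x := by
  rw [polar_add_right, polar_smul_right, polar_self, he, smul_zero, smul_zero, add_zero]

end CommRing

section Field

variable {F V : Type*} [Field F] [AddCommGroup V] [Module F V] (Q : QuadraticForm F V)

lemma map_mk_rep_eq_zero_iff {v : V} (hv : v ≠ 0) :
    Q (Projectivization.mk F v hv).rep = 0 ↔ Q v = 0 := by
  obtain ⟨a, ha⟩ := exists_smul_eq_mk_rep F v hv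
  rw [← ha, Units.smul_def, QuadraticMap.map_smul, smul_eq_zero, mul_self_eq_zero]
  simp

lemma card_zeros_eq [Finite F] [Finite V] :
    Nat.card {x // Q x = 0} = {p : ℙ F V | Q p.rep = 0}.ncard * (Nat.card F - 1) + 1 := by
  have hnonzero : Nat.card {x // Q x = 0 ∧ ¬ x = 0} =
      {p : ℙ F V | Q p.rep = 0}.ncard * (Nat.card F - 1) := by
    rw [← Nat.card_coe_set_eq, ← Nat.card_units, ← Nat.card_prod]
    exact Nat.card_congr <| (Equiv.subtypeEquivRight fun _ ↦ and_comm).trans <|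
      (Equiv.subtypeSubtypeEquivSubtypeInter (· ≠ 0) (Q · = 0)).symm.trans <|
      (Equiv.subtypeEquiv (nonZeroEquivProjectivizationProdUnits F V)
        fun v ↦ (map_mk_rep_eq_zero_iff Q v.2).symm).trans Equiv.prodSubtypeFstEquivSubtypeProd
  have hzero : Nat.card {x // Q x = 0 ∧ x = 0} = 1 :=
    Nat.card_eq_one_iff_exists.mpr ⟨⟨0, Q.map_zero, rfl⟩, fun x ↦ Subtype.ext x.2.2⟩
  rw [← Nat.card_subtype_and_add_card_subtype_and_not (Q · = 0) (· = 0), hzero, hnonzero,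
    add_comm]

variable {e : V}

/-- Along an isotropic `e`, `Q` restricted to a line `y + F e` with `polar Q e y ≠ 0` is affine
with nonzero slope, hence vanishes at exactly one point of it. -/
def isotropicLineEquiv (he : Q e = 0) :
    {x // Q x = 0 ∧ polar Q e x ≠ 0} × F ≃ {y // polar Q e y ≠ 0} where
  toFun xs := ⟨xs.1.1 + xs.2 • e, by rw [polar_add_smul_of_isotropic Q he]; exact xs.1.2.2⟩
  invFun y := (⟨y.1 + (-(Q y / polar Q e y)) • e, by
      rw [map_add_smul_of_isotropic Q he, smul_eq_mul, neg_mul, div_mul_cancel₀ _ y.2,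
        add_neg_cancel],
      by rw [polar_add_smul_of_isotropic Q he]; exact y.2⟩, Q y / polar Q e y)
  left_inv xs := by
    obtain ⟨⟨x, hxQ, hxφ⟩, s⟩ := xs
    have ht : Q (x + s • e) / polar Q e (x + s • e) = s := by
      rw [map_add_smul_of_isotropic Q he, polar_add_smul_of_isotropic Q he, hxQ, zero_add,
        smul_eq_mul, mul_div_cancel_right₀ _ hxφ]
    exact Prod.ext (Subtype.ext (by dsimp only; rw [ht, neg_smul, add_neg_cancel_right])) ht
  right_inv y := by
    ext
    simp

lemma card_zeros_polar_ne_zero [Finite V] (he : Q e = 0) (hφ : polarBilin Q e ≠ 0) :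
    Nat.card {x // Q x = 0 ∧ polar Q e x ≠ 0} * Nat.card F ^ 2 =
      Nat.card V * (Nat.card F - 1) := by
  rw [pow_two, ← mul_assoc, ← Nat.card_prod, Nat.card_congr (isotropicLineEquiv Q he)]
  exact Module.Dual.card_ne_zero_mul_card hφ

end Field

end QuadraticMap

lemma eq_two_of_card_split {q a b : ℕ} (hq : 2 ≤ q) (ha : a * q ^ 2 = q ^ 4 * (q - 1))
    (hab : a + b = 9 * (q - 1) + 1) (hb : 2 ≤ b) : q = 2 := by
  obtain ⟨r, rfl⟩ : ∃ r, q = r + 2 := ⟨q - 2, by omega⟩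
  have : a = (r + 2) ^ 2 * (r + 1) := by
    apply Nat.eq_of_mul_eq_mul_right (by positivity : 0 < (r + 2) ^ 2)
    rw [ha, show r + 2 - 1 = r + 1 by omega]; ring
  subst this
  rw [show r + 2 - 1 = r + 1 by omega] at hab
  nlinarith

lemma eq_two_of_pow_eq {q k : ℕ} (hq : 2 ≤ q) (h : q ^ k = 9 * (q - 1) + 1) : k = 2 := by
  rcases k with _ | _ | _ | k
  · rw [pow_zero] at h; omega
  · rw [pow_one] at h; omega
  · rfl
  · have hdvd : q ^ 3 ∣ 9 * (q - 1) + 1 := h ▸ pow_dvd_pow q (by omega)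
    have hle := Nat.le_of_dvd (by omega) hdvd
    have hq2 : q = 2 := by
      by_contra hq2
      have h3 : 3 ≤ q := by omega
      have : 9 * q ≤ q ^ 3 := by
        rw [pow_succ]; exact Nat.mul_le_mul_right q (by nlinarith)
      omega
    subst hq2
    norm_num at hdvd

theorem stmt15_general (F : Type*) [Field F] [Fintype F]
    (Q : QuadraticForm F (Fin 4 → F))
    (hcard : {p : Projectivization F (Fin 4 → F) | Q p.rep = 0}.ncard = 9)
    (hline : ¬ ∃ W : Submodule F (Fin 4 → F), Module.finrank F W = 2 ∧
        ∀ p ∈ {p : Projectivization F (Fin 4 → F) | Q p.rep = 0}, p.rep ∈ W) :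
    Fintype.card F = 2 := by
  have hq : 2 ≤ Nat.card F := Finite.one_lt_card
  have hzeros : Nat.card {x // Q x = 0} = 9 * (Nat.card F - 1) + 1 := hcard ▸ card_zeros_eq Q
  rw [Fintype.card_eq_nat_card]
  by_cases hrad : ∀ x, Q x = 0 → ∀ y, polar Q x y = 0
  · exfalso
    have hS : Nat.card F ^ Module.finrank F (isotropicSubmodule Q hrad) =
        9 * (Nat.card F - 1) + 1 :=
      Module.natCard_eq_pow_finrank.symm.trans hzeros
    exact hline ⟨isotropicSubmodule Q hrad, eq_two_of_pow_eq hq hS, fun p hp ↦ hp⟩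
  · push Not at hrad
    obtain ⟨e, he, y, hy⟩ := hrad
    have hφ : polarBilin Q e ≠ 0 := fun h ↦ hy (by simpa using LinearMap.congr_fun h y)
    have hradical : 2 ≤ Nat.card {x // Q x = 0 ∧ polar Q e x = 0} := by
      have he0 : e ≠ 0 := by rintro rfl; simp at hy
      have : Nontrivial {x // Q x = 0 ∧ polar Q e x = 0} :=
        ⟨⟨0, Q.map_zero, polar_zero_right _ _⟩, ⟨e, he, by simp [polar_self, he]⟩,
          fun h ↦ he0 (congrArg Subtype.val h).symm⟩
      exact Finite.one_lt_card
    have hnonradical := card_zeros_polar_ne_zero Q he hφ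
    rw [Nat.card_fun, Nat.card_fin] at hnonradical
    have hsplit : Nat.card {x // Q x = 0 ∧ polar Q e x ≠ 0} +
        Nat.card {x // Q x = 0 ∧ polar Q e x = 0} = 9 * (Nat.card F - 1) + 1 := by
      rw [add_comm, Nat.card_subtype_and_add_card_subtype_and_not, hzeros]
    exact eq_two_of_card_split hq hnonradical hsplit hradical

/-- Point-counting core of the paper's Theorem on identifiable Waring hyperplanes: if the
projective zero locus `Z` of a nonzero quadratic form on `F⁴` has exactly nine points and
the nine points are not all on one projective line, then `|F| = 2`. -/
theorem stmt15 (F : Type*) [Field F] [Fintype F]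
    (Q : QuadraticForm F (Fin 4 → F)) (hQ : Q ≠ 0)
    (hcard : {p : Projectivization F (Fin 4 → F) | Q p.rep = 0}.ncard = 9)
    (hline : ¬ ∃ W : Submodule F (Fin 4 → F), Module.finrank F W = 2 ∧
        ∀ p ∈ {p : Projectivization F (Fin 4 → F) | Q p.rep = 0}, p.rep ∈ W) :
    Fintype.card F = 2 :=
  stmt15_general F Q hcard hline
end

section
/- Let F be a finite field of cardinality q, let t ≥ 1 be a natural number with q ≥ 2t + 1, and in the F-vector space Fin (2t+2) → F consider the set C = { c(s) : s ∈ F } ∪ { e }, where c(s) is the vector with i-th coordinate s^i for i = 0, 1, …, 2t+1 and e is the vector with last coordinate 1 and all other coordinates 0. Let v ∈ Fin (2t+2) → F and suppose that for every subset S ⊆ C with |S| ≤ t we have v ∉ Submodule.span F S. If A and B are subsets of C with |A| = |B| = t + 1, v ∈ Submodule.span F A, and v ∈ Submodule.span F B, then A = B. -/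
open Polynomial Finset


lemma vand_aux (F : Type*) [Field F] (t : ℕ) (T : Finset F) (lam : F → F) (mu : F)
    (hmu : mu ≠ 0 → T.card ≤ 2*t+1) (hT : T.card ≤ 2*t+2)
    (hsum : (∑ s ∈ T, lam s • (fun i : Fin (2*t+2) => s ^ (i:ℕ)))
        + mu • (fun i : Fin (2*t+2) => if (i:ℕ) = 2*t+1 then (1:F) else 0) = 0) :
    (∀ s ∈ T, lam s = 0) ∧ mu = 0 := by
  classical
  -- coordinatewise equations
  have hcoord : ∀ j : ℕ, j < 2*t+2 →
      (∑ s ∈ T, lam s * s ^ j) + mu * (if j = 2*t+1 then (1:F) else 0) = 0 := by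
    intro j hj
    have := congrFun hsum ⟨j, hj⟩
    simpa [Finset.sum_apply] using this
  -- polynomial version
  have hpoly : ∀ p : Polynomial F, p.natDegree < 2*t+2 →
      (∑ s ∈ T, lam s * p.eval s) + mu * p.coeff (2*t+1) = 0 := by
    intro p hp
    have heval : ∀ s : F, p.eval s = ∑ j ∈ Finset.range (2*t+2), p.coeff j * s ^ j := by
      intro s; exact Polynomial.eval_eq_sum_range' hp s
    have h1 : (∑ s ∈ T, lam s * p.eval s)
        = ∑ j ∈ Finset.range (2*t+2), p.coeff j * ∑ s ∈ T, lam s * s ^ j := by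
      simp_rw [heval, Finset.mul_sum]
      rw [Finset.sum_comm]
      exact Finset.sum_congr rfl fun j _ => Finset.sum_congr rfl fun s _ => by ring
    have h2 : mu * p.coeff (2*t+1)
        = ∑ j ∈ Finset.range (2*t+2), p.coeff j * (mu * (if j = 2*t+1 then (1:F) else 0)) := by
      rw [Finset.sum_eq_single (2*t+1)]
      · simp [mul_comm]
      · intro j _ hj; simp [hj]
      · intro h; exact absurd (Finset.mem_range.mpr (by omega)) h
    rw [h1, h2, ← Finset.sum_add_distrib]
    rw [Finset.sum_congr rfl (fun j hj => by
      rw [← mul_add, hcoord j (Finset.mem_range.mp hj), mul_zero])]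
    simp
  -- each lam s = 0
  have hlam : ∀ s0 ∈ T, lam s0 = 0 := by
    intro s0 hs0
    set p : Polynomial F := ∏ s ∈ T.erase s0, (X - C s) with hp
    have hpdeg : p.natDegree = T.card - 1 := by
      rw [hp, Polynomial.natDegree_prod _ _ (fun s _ => X_sub_C_ne_zero s)]
      simp [Finset.card_erase_of_mem hs0]
    have hcoeff : mu * p.coeff (2*t+1) = 0 := by
      rcases eq_or_ne mu 0 with h | h
      · rw [h, zero_mul]
      · rw [Polynomial.coeff_eq_zero_of_natDegree_lt, mul_zero]
        have := hmu h
        have hc1 : 1 ≤ T.card := Finset.card_pos.mpr ⟨s0, hs0⟩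
        omega
    have hdeg2 : p.natDegree < 2*t+2 := by
      have hc1 : 1 ≤ T.card := Finset.card_pos.mpr ⟨s0, hs0⟩
      omega
    have := hpoly p hdeg2
    rw [hcoeff, add_zero] at this
    rw [Finset.sum_eq_single s0] at this
    · have hev : p.eval s0 ≠ 0 := by
        rw [hp, Polynomial.eval_prod]
        refine Finset.prod_ne_zero_iff.mpr fun s hs => ?_
        simp only [eval_sub, eval_X, eval_C, sub_ne_zero]
        exact fun h => (Finset.mem_erase.mp hs).1 h.symm
      exact (mul_eq_zero.mp this).resolve_right hev
    · intro s hs hne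
      have : p.eval s = 0 := by
        rw [hp, Polynomial.eval_prod]
        exact Finset.prod_eq_zero (Finset.mem_erase.mpr ⟨hne, hs⟩) (by simp)
      rw [this, mul_zero]
    · intro h; exact absurd hs0 h
  refine ⟨hlam, ?_⟩
  have := hcoord (2*t+1) (by omega)
  rw [Finset.sum_eq_zero (fun s hs => by rw [hlam s hs, zero_mul])] at this
  simpa using this

lemma indep_aux (F : Type*) [Field F] (t : ℕ) (l : (Fin (2*t+2) → F) →₀ F)
    (hsupp : ∀ w ∈ l.support, w ∈ (Set.range (fun s : F => fun i : Fin (2*t+2) => s ^ (i:ℕ)) ∪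
      {fun i : Fin (2*t+2) => if (i:ℕ) = 2*t+1 then (1:F) else 0} : Set (Fin (2*t+2) → F)))
    (hcard : l.support.card ≤ 2*t+2)
    (hsum : (l.sum fun w a => a • w) = 0) : l = 0 := by
  classical
  set c : F → (Fin (2*t+2) → F) := fun s i => s ^ (i:ℕ) with hc
  set e : Fin (2*t+2) → F := fun i => if (i:ℕ) = 2*t+1 then (1:F) else 0 with he
  have hcinj : Function.Injective c := by
    intro a b hab
    have := congrFun hab ⟨1, by omega⟩
    simpa [hc] using this
  have henc : ∀ s : F, c s ≠ e := by
    intro s h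
    have := congrFun h ⟨0, by omega⟩
    simp [hc, he] at this
  set T : Finset F := l.support.preimage c (hcinj.injOn) with hT
  have himage : T.image c = l.support.filter (· ∈ Set.range c) := by
    ext w
    simp only [Finset.mem_image, hT, Finset.mem_preimage, Finset.mem_filter]
    constructor
    · rintro ⟨s, hs, rfl⟩; exact ⟨hs, s, rfl⟩
    · rintro ⟨hw, s, rfl⟩; exact ⟨s, hw, rfl⟩
  have hTsub : T.image c ⊆ l.support := by
    rw [himage]; exact Finset.filter_subset _ _
  have heni : e ∉ T.image c := by
    intro h
    obtain ⟨s, _, hs⟩ := Finset.mem_image.mp h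
    exact henc s hs
  have hsupp' : l.support ⊆ insert e (T.image c) := by
    intro w hw
    rcases hsupp w hw with ⟨s, rfl⟩ | hw'
    · exact Finset.mem_insert_of_mem (Finset.mem_image_of_mem c
        (Finset.mem_preimage.mpr hw))
    · simp only [Set.mem_singleton_iff] at hw'
      exact hw' ▸ Finset.mem_insert_self _ _
  have hTcard : T.card ≤ 2*t+2 := by
    rw [← Finset.card_image_of_injective T hcinj]
    exact le_trans (Finset.card_le_card hTsub) hcard
  have hmucard : l e ≠ 0 → T.card ≤ 2*t+1 := by
    intro hne
    have he' : e ∈ l.support := Finsupp.mem_support_iff.mpr hne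
    have : insert e (T.image c) ⊆ l.support := by
      intro w hw
      rcases Finset.mem_insert.mp hw with rfl | hw'
      · exact he'
      · exact hTsub hw'
    have := Finset.card_le_card this
    rw [Finset.card_insert_of_notMem heni, Finset.card_image_of_injective T hcinj] at this
    omega
  -- rewrite the sum
  have hsum' : (∑ s ∈ T, l (c s) • c s) + l e • e = 0 := by
    have h1 : (l.sum fun w a => a • w) = ∑ w ∈ insert e (T.image c), l w • w := by
      rw [Finsupp.sum]
      exact Finset.sum_subset hsupp' (f := fun w => l w • w) (fun w _ hw => by
        simp [Finsupp.notMem_support_iff.mp hw])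
    rw [h1, Finset.sum_insert heni, Finset.sum_image (fun a _ b _ h => hcinj h)] at hsum
    simpa [add_comm] using hsum
  obtain ⟨hlam, hmu⟩ := vand_aux F t T (fun s => l (c s)) (l e) hmucard hTcard hsum'
  ext w
  by_cases hw : w ∈ l.support
  · rcases hsupp w hw with ⟨s, rfl⟩ | hw'
    · exact hlam s (Finset.mem_preimage.mpr hw)
    · simp only [Set.mem_singleton_iff] at hw'
      subst hw'; exact hmu
  · exact Finsupp.notMem_support_iff.mp hw

/-- Sylvester's identifiability over finite fields: with `C` the affine point set of the
rational normal curve of degree `2t+1` together with the point at infinity, if `v` is in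
the span of no `t` points of `C`, then the `(t+1)`-subsets of `C` whose span contains `v`
are unique. -/
theorem stmt16 (F : Type*) [Field F] [Fintype F] (t : ℕ) (ht : 1 ≤ t)
    (hq : 2 * t + 1 ≤ Fintype.card F) :
    letI c : F → (Fin (2 * t + 2) → F) := fun s i => s ^ (i : ℕ)
    letI e : Fin (2 * t + 2) → F := fun i => if (i : ℕ) = 2 * t + 1 then 1 else 0
    letI C : Set (Fin (2 * t + 2) → F) := Set.range c ∪ {e}
    ∀ v : Fin (2 * t + 2) → F,
      (∀ S : Set (Fin (2 * t + 2) → F), S ⊆ C → S.ncard ≤ t → v ∉ Submodule.span F S) →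
      ∀ A B : Set (Fin (2 * t + 2) → F), A ⊆ C → B ⊆ C →
        A.ncard = t + 1 → B.ncard = t + 1 →
        v ∈ Submodule.span F A → v ∈ Submodule.span F B → A = B := by
  intro v hv A B hAC hBC hAcard hBcard hvA hvB
  classical
  by_contra hne
  have hAfin : A.Finite := by
    by_contra h
    rw [Set.Infinite.ncard h] at hAcard
    omega
  have hBfin : B.Finite := by
    by_contra h
    rw [Set.Infinite.ncard h] at hBcard
    omega
  obtain ⟨f, hfsupp, hfsum⟩ := Submodule.mem_span_set.mp hvA
  obtain ⟨g, hgsupp, hgsum⟩ := Submodule.mem_span_set.mp hvB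
  have hsub : ((f - g).support : Set (Fin (2*t+2) → F)) ⊆ A ∪ B := by
    intro w hw
    have : w ∈ f.support ∪ g.support := Finset.mem_of_subset (Finsupp.support_sub) hw
    rcases Finset.mem_union.mp this with h | h
    · exact Or.inl (hfsupp h)
    · exact Or.inr (hgsupp h)
  have hfg : f = g := by
    have h0 : ((f - g).sum fun w a => a • w) = 0 := by
      rw [Finsupp.sum_sub_index (fun w a b => sub_smul a b w), hfsum, hgsum, sub_self]
    have hsupp2 : ∀ w ∈ (f - g).support,
        w ∈ (Set.range (fun s : F => fun i : Fin (2*t+2) => s ^ (i:ℕ)) ∪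
          {fun i : Fin (2*t+2) => if (i:ℕ) = 2*t+1 then (1:F) else 0} :
            Set (Fin (2*t+2) → F)) := by
      intro w hw
      rcases hsub hw with h | h
      · exact hAC h
      · exact hBC h
    have hcard2 : (f - g).support.card ≤ 2*t+2 := by
      have h1 : ((f - g).support : Set (Fin (2*t+2) → F)).ncard ≤ (A ∪ B).ncard :=
        Set.ncard_le_ncard hsub (hAfin.union hBfin)
      have h2 : (A ∪ B).ncard ≤ A.ncard + B.ncard := Set.ncard_union_le A B
      rw [Set.ncard_coe_finset] at h1
      omega
    have := indep_aux F t (f - g) hsupp2 hcard2 h0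
    exact sub_eq_zero.mp this
  have hsubAB : (f.support : Set (Fin (2*t+2) → F)) ⊆ A ∩ B :=
    Set.subset_inter hfsupp (by rw [hfg]; exact hgsupp)
  have hvAB : v ∈ Submodule.span F (A ∩ B) := Submodule.mem_span_set.mpr ⟨f, hsubAB, hfsum⟩
  have hssub : A ∩ B ⊂ A := by
    refine ⟨Set.inter_subset_left, fun h => ?_⟩
    have hAB : A ⊆ B := fun x hx => (h hx).2
    exact hne (Set.eq_of_subset_of_ncard_le hAB (by omega) hBfin)
  have hlt : (A ∩ B).ncard < t + 1 := by
    have := Set.ncard_lt_ncard hssub hAfin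
    omega
  exact hv (A ∩ B) (fun x hx => hAC hx.1) (by omega) hvAB
end
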